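/- arXiv:2602.07985 — 7 statements merged into one kernel-verified Lean document; each statement's English description precedes it below -/
import Mathlib

section
/- For every integer m ≥ 1 and every nonnegative integer n, the n-th derivative of the Gamma function at m satisfies Γ⁽ⁿ⁾(m) = Σ_{ℓ=0}^{n} T_{n,ℓ}(m) · Γ⁽ℓ⁾(1), where T_{n,ℓ}(m) = (m−1)! · (n!/ℓ!) · e_{n−ℓ}(1, 1/2, …, 1/(m−1)) and e_v denotes the v-th elementary symmetric polynomial (with e_0 := 1, e_v of the empty list := 0 for v > 0). -/
open Finset

/-- `esym x k v` = v-th elementary symmetric polynomial in `x 0, …, x (k-1)`. -/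
noncomputable def esym (x : ℕ → ℝ) (k v : ℕ) : ℝ :=
  ∑ s ∈ (Finset.range k).powersetCard v, ∏ i ∈ s, x i

/-- The rational coefficient `T_{n,ℓ}(m) = (m−1)!·(n!/ℓ!)·e_{n−ℓ}(1,1/2,…,1/(m−1))`. -/
noncomputable def Tcoef (n ℓ m : ℕ) : ℝ :=
  ((Nat.factorial (m - 1)) : ℝ) * (((Nat.factorial n) : ℝ) / ((Nat.factorial ℓ) : ℝ)) *
    esym (fun i => 1 / ((i : ℝ) + 1)) (m - 1) (n - ℓ)


lemma esym_zero (x : ℕ → ℝ) (k : ℕ) : esym x k 0 = 1 := by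
  simp [esym]

lemma esym_empty (x : ℕ → ℝ) (v : ℕ) : esym x 0 (v+1) = 0 := by
  rw [esym, Finset.powersetCard_eq_empty.2 (by simp), Finset.sum_empty]

lemma esym_succ (x : ℕ → ℝ) (k v : ℕ) :
    esym x (k+1) (v+1) = esym x k (v+1) + x k * esym x k v := by
  have hk : k ∉ Finset.range k := by simp
  unfold esym
  rw [Finset.range_add_one, Finset.powersetCard_succ_insert hk,
    Finset.sum_union, Finset.sum_image, Finset.mul_sum]
  · congr 1
    apply Finset.sum_congr rfl
    intro s hs
    rw [Finset.mem_powersetCard] at hs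
    rw [Finset.prod_insert (fun h => hk (hs.1 h))]
  · intro s hs t ht hst
    rw [Finset.mem_coe, Finset.mem_powersetCard] at hs ht
    have : ∀ u : Finset ℕ, u ⊆ Finset.range k → (insert k u).erase k = u := by
      intro u hu
      rw [Finset.erase_insert (fun h => hk (hu h))]
    rw [← this s hs.1, ← this t ht.1, hst]
  · rw [Finset.disjoint_right]
    intro s hs hs'
    rw [Finset.mem_image] at hs
    obtain ⟨t, ht, rfl⟩ := hs
    rw [Finset.mem_powersetCard] at hs'
    exact hk (hs'.1 (Finset.mem_insert_self k t))

lemma Tcoef_base (n ℓ : ℕ) (h : ℓ ≤ n) :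
    Tcoef n ℓ 1 = if ℓ = n then 1 else 0 := by
  rcases eq_or_lt_of_le h with rfl | hlt
  · simp [Tcoef, esym_zero, div_self (by exact_mod_cast Nat.factorial_ne_zero ℓ : ((Nat.factorial ℓ : ℝ)) ≠ 0)]
  · have : n - ℓ = (n - ℓ - 1) + 1 := by omega
    rw [Tcoef, this]
    simp [esym_empty, Nat.ne_of_lt hlt]

lemma Tcoef_top (n m : ℕ) (hm : 1 ≤ m) :
    Tcoef n n (m+1) = m * Tcoef n n m := by
  obtain ⟨k, rfl⟩ := Nat.exists_eq_add_of_le hm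
  simp only [Tcoef, Nat.sub_self, esym_zero, Nat.add_sub_cancel_left]
  have : 1 + k + 1 - 1 = k + 1 := by omega
  rw [this, Nat.factorial_succ]
  push_cast
  ring

lemma Tcoef_rec (n ℓ m : ℕ) (hm : 1 ≤ m) (hl : ℓ ≤ n) :
    Tcoef (n+1) ℓ (m+1) = m * Tcoef (n+1) ℓ m + (n+1) * Tcoef n ℓ m := by
  obtain ⟨k, rfl⟩ := Nat.exists_eq_add_of_le hm
  have h1 : 1 + k + 1 - 1 = k + 1 := by omega
  have h2 : 1 + k - 1 = k := by omega
  have h3 : n + 1 - ℓ = (n - ℓ) + 1 := by omega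
  simp only [Tcoef, h1, h2, h3]
  rw [esym_succ, Nat.factorial_succ k, Nat.factorial_succ n]
  have hk : ((k : ℝ) + 1) ≠ 0 := by positivity
  push_cast
  field_simp
  ring

open Set Topology in
section
lemma gamma_cdOn : ContDiffOn ℝ ⊤ Real.Gamma (Set.Ioi 0) := by
  have hU : IsOpen {z : ℂ | 0 < z.re} := isOpen_lt continuous_const Complex.continuous_re
  have hd : DifferentiableOn ℂ Complex.Gamma {z : ℂ | 0 < z.re} := fun z hz =>
    (Complex.differentiableAt_Gamma z (fun m => by
      intro h; rw [h] at hz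
      simp only [Set.mem_setOf_eq, Complex.neg_re, Complex.natCast_re] at hz
      have := Nat.cast_nonneg (α := ℝ) m; linarith)).differentiableWithinAt
  have hC : ContDiffOn ℂ ⊤ Complex.Gamma {z : ℂ | 0 < z.re} :=
    (hd.analyticOnNhd hU).contDiffOn (n := ⊤) hU.uniqueDiffOn
  have hR : ContDiffOn ℝ ⊤ Complex.Gamma {z : ℂ | 0 < z.re} := hC.restrict_scalars ℝ
  have h1 : ContDiffOn ℝ ⊤ (fun x : ℝ => (Complex.Gamma x).re) (Set.Ioi 0) := by
    apply (Complex.reCLM.contDiff.comp_contDiffOn)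
    apply hR.comp (Complex.ofRealCLM.contDiff.contDiffOn)
    intro x hx
    simpa using hx
  have : Set.EqOn Real.Gamma (fun x : ℝ => (Complex.Gamma x).re) (Set.Ioi 0) := by
    intro x _; show Real.Gamma x = (Complex.Gamma x).re; rw [Complex.Gamma_ofReal, Complex.ofReal_re]
  exact h1.congr this

lemma gamma_iter_diff (k : ℕ) {x : ℝ} (hx : 0 < x) :
    DifferentiableAt ℝ (iteratedDeriv k Real.Gamma) x := by
  have hO : IsOpen (Set.Ioi (0:ℝ)) := isOpen_Ioi
  have hW : DifferentiableWithinAt ℝ (iteratedDerivWithin k Real.Gamma (Set.Ioi 0)) (Set.Ioi 0) x :=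
    gamma_cdOn.differentiableOn_iteratedDerivWithin (by exact_mod_cast lt_top_iff_ne_top.2 (by simp)) hO.uniqueDiffOn x hx
  have hEq : Set.EqOn (iteratedDerivWithin k Real.Gamma (Set.Ioi 0)) (iteratedDeriv k Real.Gamma) (Set.Ioi 0) := by
    intro y hy
    rw [iteratedDerivWithin_eq_iteratedFDerivWithin, iteratedDeriv_eq_iteratedFDeriv,
      iteratedFDerivWithin_of_isOpen k hO hy]
  have hDA := hW.differentiableAt (hO.mem_nhds hx)
  exact hDA.congr_of_eventuallyEq (Filter.eventuallyEq_of_mem (hO.mem_nhds hx) hEq).symm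

lemma leibniz (n : ℕ) : ∀ {x : ℝ}, 0 < x →
    iteratedDeriv (n+1) (fun y => y * Real.Gamma y) x
      = x * iteratedDeriv (n+1) Real.Gamma x + (n+1) * iteratedDeriv n Real.Gamma x := by
  induction n with
  | zero =>
    intro x hx
    rw [iteratedDeriv_one]
    have h := deriv_fun_mul (differentiableAt_fun_id (x := x)) (gamma_iter_diff 0 hx)
    simp only [iteratedDeriv_zero] at h ⊢
    rw [h]
    simp [deriv_id'', iteratedDeriv_one]
    ring
  | succ n ih =>
    intro x hx
    rw [iteratedDeriv_succ]
    have hEv : iteratedDeriv (n+1) (fun y => y * Real.Gamma y) =ᶠ[nhds x]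
        (fun y => y * iteratedDeriv (n+1) Real.Gamma y + (n+1) * iteratedDeriv n Real.Gamma y) := by
      filter_upwards [isOpen_Ioi.mem_nhds hx] with y hy
      exact ih hy
    rw [hEv.deriv_eq]
    have d1 : DifferentiableAt ℝ (fun y : ℝ => y * iteratedDeriv (n+1) Real.Gamma y) x :=
      differentiableAt_fun_id.mul (gamma_iter_diff (n+1) hx)
    have d2 : DifferentiableAt ℝ (fun y : ℝ => ((n:ℝ)+1) * iteratedDeriv n Real.Gamma y) x :=
      (gamma_iter_diff n hx).const_mul _
    rw [deriv_fun_add d1 d2, deriv_fun_mul differentiableAt_fun_id (gamma_iter_diff (n+1) hx),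
      deriv_const_mul _ (gamma_iter_diff n hx)]
    rw [← iteratedDeriv_succ, ← iteratedDeriv_succ]
    simp only [deriv_id'']
    push_cast
    ring

lemma gamma_recS (n : ℕ) {x : ℝ} (hx : 0 < x) :
    iteratedDeriv (n+1) Real.Gamma (x+1)
      = x * iteratedDeriv (n+1) Real.Gamma x + (n+1) * iteratedDeriv n Real.Gamma x := by
  have h1 : iteratedDeriv (n+1) Real.Gamma (x+1)
      = iteratedDeriv (n+1) (fun y => Real.Gamma (y+1)) x := by
    rw [iteratedDeriv_comp_add_const]
  rw [h1]
  have hEv : (fun y => Real.Gamma (y+1)) =ᶠ[nhds x] (fun y => y * Real.Gamma y) := by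
    filter_upwards [isOpen_Ioi.mem_nhds hx] with y hy
    exact Real.Gamma_add_one (ne_of_gt hy)
  rw [hEv.iteratedDeriv_eq (n+1)]
  exact leibniz n hx

end

lemma stmt0_aux (m : ℕ) (hm : 1 ≤ m) : ∀ n : ℕ,
    iteratedDeriv n Real.Gamma (m : ℝ) =
      ∑ ℓ ∈ Finset.range (n + 1), Tcoef n ℓ m * iteratedDeriv ℓ Real.Gamma 1 := by
  induction m, hm using Nat.le_induction with
  | base =>
    intro n
    rw [Finset.sum_eq_single n]
    · rw [Tcoef_base n n le_rfl, if_pos rfl, one_mul, Nat.cast_one]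
    · intro ℓ hℓ hne
      rw [Finset.mem_range] at hℓ
      rw [Tcoef_base n ℓ (by omega), if_neg hne, zero_mul]
    · intro h
      exact absurd (Finset.self_mem_range_succ n) h
  | succ m hm ih =>
    intro n
    have hmpos : (0 : ℝ) < m := by exact_mod_cast hm
    have hcast : ((m + 1 : ℕ) : ℝ) = (m : ℝ) + 1 := by push_cast; ring
    rw [hcast]
    cases n with
    | zero =>
      simp only [iteratedDeriv_zero]
      rw [Real.Gamma_add_one (ne_of_gt hmpos)]
      have := ih 0
      simp only [iteratedDeriv_zero] at this
      rw [this]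
      simp only [zero_add, Finset.sum_range_one]
      rw [Tcoef_top 0 m hm]
      ring
    | succ n =>
      rw [gamma_recS n hmpos, ih (n+1), ih n]
      have hsum : ∑ ℓ ∈ Finset.range (n+1+1), Tcoef (n+1) ℓ (m+1) * iteratedDeriv ℓ Real.Gamma 1
          = (∑ ℓ ∈ Finset.range (n+1),
              ((m : ℝ) * Tcoef (n+1) ℓ m + (n+1) * Tcoef n ℓ m) * iteratedDeriv ℓ Real.Gamma 1)
            + (m : ℝ) * Tcoef (n+1) (n+1) m * iteratedDeriv (n+1) Real.Gamma 1 := by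
        rw [Finset.sum_range_succ, Tcoef_top (n+1) m hm]
        congr 1
        apply Finset.sum_congr rfl
        intro ℓ hℓ
        rw [Finset.mem_range] at hℓ
        rw [Tcoef_rec n ℓ m hm (by omega)]
      rw [hsum, Finset.sum_range_succ (n := n + 1)]
      simp only [mul_add, add_mul, Finset.mul_sum, Finset.sum_add_distrib, mul_assoc]
      ring

theorem stmt0 (m : ℕ) (hm : 1 ≤ m) (n : ℕ) :
    iteratedDeriv n Real.Gamma (m : ℝ) =
      ∑ ℓ ∈ Finset.range (n + 1), Tcoef n ℓ m * iteratedDeriv ℓ Real.Gamma 1 := by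
  exact stmt0_aux m hm n
end

section
/- Let n ≥ 1 and let 0 ≤ m'_1 < m'_2 < … < m'_{n} be integers, with x_1, …, x_{m'_n} positive reals. Then the n × n matrix H whose (r,c) entry is h_{c−1}(x_1, …, x_{m'_r}) (the (c−1)-th complete homogeneous symmetric polynomial, with h_0 := 1 and h_v of the empty list := 0 for v > 0) has strictly positive determinant. -/
open Finset

/-- `hsym x k v` = v-th complete homogeneous symmetric polynomial in `x 0, …, x (k-1)`. -/
noncomputable def hsym (x : ℕ → ℝ) (k v : ℕ) : ℝ :=
  ∑ s ∈ (Finset.range k).sym v, ((s : Multiset ℕ).map x).prod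

lemma hsym_zero (x : ℕ → ℝ) (k : ℕ) : hsym x k 0 = 1 := by
  have : ((∅ : Sym ℕ 0) : Multiset ℕ) = 0 := rfl
  simp [hsym, Finset.sym_zero, this]

lemma hsym_nil (x : ℕ → ℝ) (v : ℕ) : hsym x 0 (v+1) = 0 := by
  simp [hsym, Finset.sym_empty]

lemma hsym_succ (x : ℕ → ℝ) (k v : ℕ) :
    hsym x (k+1) (v+1) = hsym (fun i => x (i+1)) k (v+1) + x 0 * hsym x (k+1) v := by
  classical
  unfold hsym
  rw [← Finset.sum_filter_add_sum_filter_not ((Finset.range (k+1)).sym (v+1))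
      (fun s => (0:ℕ) ∈ s)]
  have h1 : ∑ s ∈ ((Finset.range (k+1)).sym (v+1)).filter (fun s => (0:ℕ) ∈ s),
      ((s : Multiset ℕ).map x).prod
      = x 0 * ∑ t ∈ (Finset.range (k+1)).sym v, ((t : Multiset ℕ).map x).prod := by
    rw [Finset.mul_sum]
    refine Finset.sum_bij' (i := fun a ha => a.erase 0 (by simpa using (Finset.mem_filter.1 ha).2))
      (j := fun b _ => (0 : ℕ) ::ₛ b) ?_ ?_ ?_ ?_ ?_
    · intro a ha
      rw [Finset.mem_sym_iff]
      intro b hb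
      have := Finset.mem_sym_iff.1 (Finset.mem_filter.1 ha).1
      exact this b (by
        rw [← Sym.mem_coe, Sym.coe_erase] at hb
        exact Sym.mem_coe.1 (Multiset.mem_of_mem_erase hb))
    · intro b hb
      rw [Finset.mem_filter]
      constructor
      · rw [Finset.mem_sym_iff]
        intro c hc
        rcases Sym.mem_cons.1 hc with h | h
        · subst h; simp
        · exact Finset.mem_sym_iff.1 hb c h
      · exact Sym.mem_cons_self 0 b
    · intro a ha
      exact Sym.cons_erase _
    · intro b hb
      exact Sym.erase_cons_head b 0
    · intro a ha
      have h0 : (0:ℕ) ∈ a := by simpa using (Finset.mem_filter.1 ha).2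
      conv_lhs => rw [← Sym.cons_erase h0]
      rw [Sym.coe_cons, Multiset.map_cons, Multiset.prod_cons]
  have h2 : ∑ s ∈ ((Finset.range (k+1)).sym (v+1)).filter (fun s => ¬ (0:ℕ) ∈ s),
      ((s : Multiset ℕ).map x).prod
      = ∑ t ∈ (Finset.range k).sym (v+1), ((t : Multiset ℕ).map (fun i => x (i+1))).prod := by
    refine Finset.sum_bij' (i := fun a _ => a.map (· - 1)) (j := fun b _ => b.map (· + 1))
      ?_ ?_ ?_ ?_ ?_
    · intro a ha
      obtain ⟨hmem, h0⟩ := Finset.mem_filter.1 ha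
      rw [Finset.mem_sym_iff]
      intro b hb
      obtain ⟨c, hc, rfl⟩ := Sym.mem_map.1 hb
      have hck : c ∈ Finset.range (k+1) := Finset.mem_sym_iff.1 hmem c hc
      have hc0 : c ≠ 0 := fun h => h0 (h ▸ hc)
      rw [Finset.mem_range] at hck ⊢
      omega
    · intro b hb
      rw [Finset.mem_filter]
      constructor
      · rw [Finset.mem_sym_iff]
        intro c hc
        obtain ⟨d, hd, rfl⟩ := Sym.mem_map.1 hc
        have := Finset.mem_sym_iff.1 hb d hd
        rw [Finset.mem_range] at this ⊢
        omega
      · intro h0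
        obtain ⟨d, _, hd⟩ := Sym.mem_map.1 h0
        omega
    · intro a ha
      have h0 : ¬ (0:ℕ) ∈ a := by simpa using (Finset.mem_filter.1 ha).2
      rw [Sym.map_map]
      rw [Sym.map_congr (g := id) (fun c hc => by
        have : c ≠ 0 := fun h => h0 (h ▸ hc)
        simp only [Function.comp_apply, id_eq]; omega)]
      exact Sym.map_id a
    · intro b hb
      rw [Sym.map_map]
      rw [Sym.map_congr (g := id) (fun c hc => by simp)]
      exact Sym.map_id b
    · intro a ha
      have h0 : ¬ (0:ℕ) ∈ a := by simpa using (Finset.mem_filter.1 ha).2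
      rw [Sym.coe_map, Multiset.map_map]
      refine congrArg Multiset.prod (Multiset.map_congr rfl ?_)
      intro c hc
      have : c ≠ 0 := fun h => h0 (h ▸ (Sym.mem_coe.1 hc))
      simp only [Function.comp_apply]
      congr 1
      omega
  rw [h1, h2]
  ring

noncomputable def Bmat (n : ℕ) (x : ℕ → ℝ) (m : Fin n → ℕ) (p : ℕ) (d : ℕ → ℕ) :
    Matrix (Fin n) (Fin n) ℝ :=
  fun r c => if (c : ℕ) < p then hsym x (m r) (d c) else hsym (fun i => x (i+1)) (m r - 1) (d c)

lemma strictMono_update {d : ℕ → ℕ} (hd : StrictMono d) {p t : ℕ}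
    (h1 : p = 0 ∨ d (p-1) < t) (h2 : t < d (p+1)) : StrictMono (Function.update d p t) := by
  have key1 : ∀ q, q < p → d q < t := by
    intro q hq
    rcases h1 with h1 | h1
    · omega
    · exact lt_of_le_of_lt (hd.monotone (by omega)) h1
  have key2 : ∀ q, p < q → t < d q := fun q hq => lt_of_lt_of_le h2 (hd.monotone (by omega))
  intro a b hab
  rw [Function.update_apply, Function.update_apply]
  by_cases ha : a = p
  · rw [if_pos ha]
    by_cases hb : b = p
    · exact absurd hab (by omega)
    · rw [if_neg hb]; exact key2 b (by omega)
  · rw [if_neg ha]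
    by_cases hb : b = p
    · rw [if_pos hb]; exact key1 a (by omega)
    · rw [if_neg hb]; exact hd hab

lemma Bmat_split (n : ℕ) (x : ℕ → ℝ) (m : Fin n → ℕ) (hm1 : ∀ r, 1 ≤ m r)
    (p : ℕ) (hp : p < n) (d : ℕ → ℕ) (hd1 : 1 ≤ d p) :
    (Bmat n x m (p+1) d).det = (Bmat n x m p d).det
      + x 0 * (Bmat n x m (p+1) (Function.update d p (d p - 1))).det := by
  classical
  have hkey : Bmat n x m (p+1) d = (Bmat n x m p d).updateCol ⟨p, hp⟩
      ((fun r => hsym (fun i => x (i+1)) (m r - 1) (d p))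
        + x 0 • (fun r => hsym x (m r) (d p - 1))) := by
    funext r c
    rw [Matrix.updateCol_apply]
    by_cases hc : c = ⟨p, hp⟩
    · rw [if_pos hc]
      have hc' : (c : ℕ) = p := by rw [hc]
      simp only [Bmat, Pi.add_apply, Pi.smul_apply, smul_eq_mul]
      rw [if_pos (by omega), hc']
      obtain ⟨mr, hmr⟩ : ∃ t, m r = t + 1 := ⟨m r - 1, by have := hm1 r; omega⟩
      obtain ⟨w, hw⟩ : ∃ w, d p = w + 1 := ⟨d p - 1, by omega⟩
      rw [hmr, hw, hsym_succ]
      simp [Nat.add_sub_cancel]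
    · rw [if_neg hc]
      have hcp : (c : ℕ) ≠ p := fun h => hc (Fin.ext h)
      simp only [Bmat]
      rcases lt_or_gt_of_ne hcp with h | h
      · rw [if_pos (by omega), if_pos h]
      · rw [if_neg (by omega), if_neg (by omega)]
  have e1 : (Bmat n x m p d).updateCol ⟨p, hp⟩
      (fun r => hsym (fun i => x (i+1)) (m r - 1) (d p)) = Bmat n x m p d := by
    funext r c
    rw [Matrix.updateCol_apply]
    by_cases hc : c = ⟨p, hp⟩
    · rw [if_pos hc]
      have hc' : (c : ℕ) = p := by rw [hc]
      simp only [Bmat]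
      rw [if_neg (by omega), hc']
    · rw [if_neg hc]
  have e2 : (Bmat n x m p d).updateCol ⟨p, hp⟩
      (fun r => hsym x (m r) (d p - 1))
      = Bmat n x m (p+1) (Function.update d p (d p - 1)) := by
    funext r c
    rw [Matrix.updateCol_apply]
    by_cases hc : c = ⟨p, hp⟩
    · rw [if_pos hc]
      have hc' : (c : ℕ) = p := by rw [hc]
      simp only [Bmat]
      rw [if_pos (by omega), hc', Function.update_self]
    · rw [if_neg hc]
      have hcp : (c : ℕ) ≠ p := fun h => hc (Fin.ext h)
      simp only [Bmat, Function.update_apply, if_neg hcp]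
      rcases lt_or_gt_of_ne hcp with h | h
      · rw [if_pos h, if_pos (show (c:ℕ) < p + 1 by omega)]
      · rw [if_neg (show ¬ (c:ℕ) < p by omega), if_neg (show ¬ (c:ℕ) < p + 1 by omega)]
  rw [hkey, Matrix.det_updateCol_add, Matrix.det_updateCol_smul, e1, e2]

lemma inner_nonneg (n : ℕ) (x : ℕ → ℝ) (m : Fin n → ℕ)
    (hx : ∀ i, 0 < x i) (hm1 : ∀ r, 1 ≤ m r)
    (OIH : ∀ k : ℕ → ℕ, StrictMono k → 0 ≤ (Bmat n x m 0 k).det) :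
    ∀ V p d, p ≤ n → StrictMono d → (∑ c ∈ Finset.range p, (d c + 1)) ≤ V →
      0 ≤ (Bmat n x m p d).det := by
  intro V
  induction V with
  | zero =>
    intro p d hp hd hV
    cases p with
    | zero => exact OIH d hd
    | succ q =>
      exfalso
      have h1 : (Finset.range (q+1)).card • 1 ≤ ∑ c ∈ Finset.range (q+1), (d c + 1) :=
        Finset.card_nsmul_le_sum _ _ 1 (fun c _ => by omega)
      simp only [Finset.card_range, smul_eq_mul, mul_one] at h1
      omega
  | succ V ih =>
    intro p d hp hd hV
    cases p with
    | zero => exact OIH d hd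
    | succ q =>
      have hsum : ∑ c ∈ Finset.range (q+1), (d c + 1)
          = ∑ c ∈ Finset.range q, (d c + 1) + (d q + 1) := Finset.sum_range_succ _ _
      by_cases hdq : d q = 0
      · have hq0 : q = 0 := by
          by_contra h
          have := hd (show 0 < q by omega)
          omega
        subst hq0
        have hBe : Bmat n x m 1 d = Bmat n x m 0 d := by
          funext r c
          simp only [Bmat]
          by_cases h : (c : ℕ) < 1
          · have h0 : (c : ℕ) = 0 := by omega
            rw [if_pos h, if_neg (by omega), h0, hdq, hsym_zero, hsym_zero]
          · rw [if_neg h, if_neg (by omega)]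
        rw [hBe]
        exact OIH d hd
      · have hqn : q < n := by omega
        rw [Bmat_split n x m hm1 q hqn d (by omega)]
        have t1 : 0 ≤ (Bmat n x m q d).det := ih q d (by omega) hd (by omega)
        have t2 : 0 ≤ (Bmat n x m (q+1) (Function.update d q (d q - 1))).det := by
          by_cases hcase : q = 0 ∨ d (q-1) < d q - 1
          · refine ih (q+1) _ hp (strictMono_update hd hcase (by
              have := hd (show q < q + 1 by omega); omega)) ?_
            have hsum2 : ∑ c ∈ Finset.range (q+1), (Function.update d q (d q - 1) c + 1)
                = ∑ c ∈ Finset.range q, (d c + 1) + (d q - 1 + 1) := by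
              rw [Finset.sum_range_succ, Function.update_self]
              congr 1
              refine Finset.sum_congr rfl (fun c hc => ?_)
              rw [Function.update_of_ne (by simp only [Finset.mem_range] at hc; omega)]
            omega
          · push_neg at hcase
            obtain ⟨hq0, hge⟩ := hcase
            have heq : d (q-1) = d q - 1 := by
              have := hd (show q - 1 < q by omega)
              omega
            refine le_of_eq (Matrix.det_zero_of_column_eq (M := Bmat n x m (q+1)
              (Function.update d q (d q - 1))) (i := ⟨q-1, by omega⟩) (j := ⟨q, hqn⟩)
              (by simp only [ne_eq, Fin.mk.injEq]; omega) ?_).symm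
            intro r
            simp only [Bmat, Function.update_apply]
            rw [if_pos (show q - 1 < q + 1 by omega), if_pos (show q < q + 1 by omega),
              if_neg (show ¬ (q - 1 = q) by omega)]
            simp [heq]
        have hx0 := hx 0
        nlinarith

lemma inner_nonneg_update (n : ℕ) (x : ℕ → ℝ) (m : Fin n → ℕ)
    (hx : ∀ i, 0 < x i) (hm1 : ∀ r, 1 ≤ m r)
    (OIH : ∀ k : ℕ → ℕ, StrictMono k → 0 ≤ (Bmat n x m 0 k).det)
    (p : ℕ) (d : ℕ → ℕ) (hp : p < n) (hd : StrictMono d) (hd1 : 1 ≤ d p) :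
    0 ≤ (Bmat n x m (p+1) (Function.update d p (d p - 1))).det := by
  by_cases hcase : p = 0 ∨ d (p-1) < d p - 1
  · exact inner_nonneg n x m hx hm1 OIH _ (p+1) _ hp
      (strictMono_update hd hcase (by have := hd (show p < p + 1 by omega); omega)) le_rfl
  · push_neg at hcase
    obtain ⟨hq0, hge⟩ := hcase
    have heq : d (p-1) = d p - 1 := by
      have := hd (show p - 1 < p by omega)
      omega
    refine le_of_eq (Matrix.det_zero_of_column_eq (M := Bmat n x m (p+1)
      (Function.update d p (d p - 1))) (i := ⟨p-1, by omega⟩) (j := ⟨p, hp⟩)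
      (by simp only [ne_eq, Fin.mk.injEq]; omega) ?_).symm
    intro r
    simp only [Bmat, Function.update_apply]
    rw [if_pos (show p - 1 < p + 1 by omega), if_pos (show p < p + 1 by omega),
      if_neg (show ¬ (p - 1 = p) by omega)]
    simp [heq]

lemma inner_reduce (n : ℕ) (x : ℕ → ℝ) (m : Fin n → ℕ)
    (hx : ∀ i, 0 < x i) (hm1 : ∀ r, 1 ≤ m r)
    (OIH : ∀ k : ℕ → ℕ, StrictMono k → 0 ≤ (Bmat n x m 0 k).det) :
    ∀ Δ p d t, p < n → StrictMono d → (p = 0 ∨ d (p-1) < t) → t ≤ d p → d p ≤ t + Δ →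
      0 < (Bmat n x m (p+1) (Function.update d p t)).det →
      0 < (Bmat n x m (p+1) d).det := by
  intro Δ
  induction Δ with
  | zero =>
    intro p d t hp hd hc ht1 ht2 h
    obtain rfl : t = d p := by omega
    rwa [Function.update_eq_self] at h
  | succ Δ ih =>
    intro p d t hp hd hc ht1 ht2 h
    rcases eq_or_lt_of_le ht1 with he | hlt
    · rw [he, Function.update_eq_self] at h; exact h
    · have hd1 : 1 ≤ d p := by omega
      rw [Bmat_split n x m hm1 p hp d hd1]
      have h1 : 0 ≤ (Bmat n x m p d).det :=
        inner_nonneg n x m hx hm1 OIH _ p d (by omega) hd le_rfl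
      have hdm : StrictMono (Function.update d p (d p - 1)) := by
        refine strictMono_update hd ?_ (by have := hd (show p < p + 1 by omega); omega)
        rcases hc with hc | hc
        · exact Or.inl hc
        · exact Or.inr (by omega)
      have h2 : 0 < (Bmat n x m (p+1) (Function.update d p (d p - 1))).det := by
        refine ih p _ t hp hdm ?_ ?_ ?_ ?_
        · by_cases hp0 : p = 0
          · exact Or.inl hp0
          · rcases hc with hc | hc
            · exact Or.inl hc
            · exact Or.inr (by rw [Function.update_of_ne (by omega)]; exact hc)
        · rw [Function.update_self]; omega
        · rw [Function.update_self]; omega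
        · rw [Function.update_idem]; exact h
      have hx0 := hx 0
      nlinarith

lemma inner_convert (n : ℕ) (x : ℕ → ℝ) (m : Fin n → ℕ)
    (hx : ∀ i, 0 < x i) (hm1 : ∀ r, 1 ≤ m r)
    (OIH : ∀ k : ℕ → ℕ, StrictMono k → 0 ≤ (Bmat n x m 0 k).det)
    (p : ℕ) (d : ℕ → ℕ) (hp : p < n) (hd : StrictMono d)
    (h : 0 < (Bmat n x m p d).det) : 0 < (Bmat n x m (p+1) d).det := by
  by_cases hdp : d p = 0
  · have hp0 : p = 0 := by
      by_contra hne
      have := hd (show 0 < p by omega)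
      omega
    subst hp0
    have hBe : Bmat n x m 1 d = Bmat n x m 0 d := by
      funext r c
      simp only [Bmat]
      by_cases hcc : (c : ℕ) < 1
      · have h0 : (c : ℕ) = 0 := by omega
        rw [if_pos hcc, if_neg (by omega), h0, hdp, hsym_zero, hsym_zero]
      · rw [if_neg hcc, if_neg (by omega)]
    rwa [hBe]
  · rw [Bmat_split n x m hm1 p hp d (by omega)]
    have h2 : 0 ≤ (Bmat n x m (p+1) (Function.update d p (d p - 1))).det :=
      inner_nonneg_update n x m hx hm1 OIH p d hp hd (by omega)
    have hx0 := hx 0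
    nlinarith

def finalize (p : ℕ) (d : ℕ → ℕ) : ℕ → ℕ :=
  fun c => if c < p then (if c = 0 then 0 else d (c-1) + 1) else d c

lemma finalize_strictMono (p : ℕ) {d : ℕ → ℕ} (hd : StrictMono d) :
    StrictMono (finalize p d) := by
  intro a b hab
  simp only [finalize]
  by_cases ha : a < p
  · rw [if_pos ha]
    by_cases hb : b < p
    · rw [if_pos hb, if_neg (show ¬ b = 0 by omega)]
      by_cases ha0 : a = 0
      · rw [if_pos ha0]; omega
      · rw [if_neg ha0]
        have := hd (show a - 1 < b - 1 by omega)
        omega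
    · rw [if_neg hb]
      by_cases ha0 : a = 0
      · rw [if_pos ha0]
        have := hd (show 0 < b by omega)
        omega
      · rw [if_neg ha0]
        have h1 := hd (show a - 1 < a by omega)
        have h2 := hd hab
        omega
  · rw [if_neg ha, if_neg (show ¬ b < p by omega)]
    exact hd hab

lemma inner_chain (n : ℕ) (x : ℕ → ℝ) (m : Fin n → ℕ)
    (hx : ∀ i, 0 < x i) (hm1 : ∀ r, 1 ≤ m r)
    (OIH : ∀ k : ℕ → ℕ, StrictMono k → 0 ≤ (Bmat n x m 0 k).det) :
    ∀ p, p ≤ n → ∀ d : ℕ → ℕ, StrictMono d →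
      0 < (Bmat n x m 0 (finalize p d)).det → 0 < (Bmat n x m p d).det := by
  intro p
  induction p with
  | zero =>
    intro _ d hd h
    have he : finalize 0 d = d := funext fun c => by simp [finalize]
    rwa [he] at h
  | succ p ih =>
    intro hp d hd h
    set t := (if p = 0 then 0 else d (p-1) + 1) with hts
    have htle : t ≤ d p := by
      by_cases hp0 : p = 0
      · simp [hts, hp0]
      · have := hd (show p - 1 < p by omega)
        simp only [hts, if_neg hp0]
        omega
    have hcnd : p = 0 ∨ d (p-1) < t := by
      by_cases hp0 : p = 0
      · exact Or.inl hp0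
      · exact Or.inr (by simp only [hts, if_neg hp0]; omega)
    have hd' : StrictMono (Function.update d p t) := by
      refine strictMono_update hd hcnd ?_
      have := hd (show p < p + 1 by omega)
      omega
    refine inner_reduce n x m hx hm1 OIH (d p) p d t hp hd hcnd htle (by omega) ?_
    refine inner_convert n x m hx hm1 OIH p _ hp hd' ?_
    refine ih (by omega) _ hd' ?_
    have hfe : finalize p (Function.update d p t) = finalize (p+1) d := by
      funext c
      simp only [finalize, Function.update_apply]
      by_cases h1 : c < p
      · rw [if_pos h1, if_pos (show c < p + 1 by omega)]
        by_cases h2 : c = 0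
        · rw [if_pos h2, if_pos h2]
        · rw [if_neg h2, if_neg h2, if_neg (show ¬ (c - 1 = p) by omega)]
      · by_cases h3 : c = p
        · subst h3
          rw [if_neg h1, if_pos rfl, if_pos (show c < c + 1 by omega)]
        · rw [if_neg h1, if_neg h3, if_neg (show ¬ c < p + 1 by omega)]
    rwa [hfe]

lemma det_expand0 {n : ℕ} (A : Matrix (Fin (n+1)) (Fin (n+1)) ℝ) (h0 : A 0 0 = 1)
    (h : ∀ j : Fin (n+1), j ≠ 0 → A 0 j = 0) :
    A.det = (A.submatrix Fin.succ Fin.succ).det := by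
  rw [Matrix.det_succ_row_zero, Finset.sum_eq_single 0]
  · rw [h0, Fin.succAbove_zero]
    simp
  · intro j _ hj
    rw [h j hj]
    ring
  · intro hmem
    exact absurd (Finset.mem_univ 0) hmem

lemma outer : ∀ N : ℕ, ∀ n : ℕ, ∀ m : Fin n → ℕ, ∀ l : ℕ → ℕ, ∀ x : ℕ → ℝ,
    StrictMono m → StrictMono l → (∀ i, 0 < x i) → n + ∑ r, m r ≤ N →
    0 ≤ Matrix.det (fun r c : Fin n => hsym x (m r) (l (c : ℕ))) ∧
    ((∀ h : 0 < n, l 0 = 0 ∨ 1 ≤ m ⟨0, h⟩) →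
      0 < Matrix.det (fun r c : Fin n => hsym x (m r) (l (c : ℕ)))) := by
  intro N
  induction N using Nat.strong_induction_on with
  | _ N IH =>
  intro n m l x hm hl hx hN
  rcases Nat.eq_zero_or_pos n with hn0 | hn0
  · subst hn0
    constructor
    · rw [Matrix.det_fin_zero (A := fun r c : Fin 0 => hsym x (m r) (l (c : ℕ)))]; norm_num
    · intro _; rw [Matrix.det_fin_zero (A := fun r c : Fin 0 => hsym x (m r) (l (c : ℕ)))]; norm_num
  obtain ⟨n', rfl⟩ : ∃ n'', n = n'' + 1 := ⟨n - 1, by omega⟩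
  by_cases hm0 : m 0 = 0
  · by_cases hl0 : l 0 = 0
    · -- expand along the first row
      have h00 : (fun r c : Fin (n'+1) => hsym x (m r) (l (c : ℕ))) 0 0 = 1 := by
        show hsym x (m 0) (l ((0 : Fin (n'+1)) : ℕ)) = 1
        rw [show ((0 : Fin (n'+1)) : ℕ) = 0 from rfl, hl0, hsym_zero]
      have hrow : ∀ j : Fin (n'+1), j ≠ 0 →
          (fun r c : Fin (n'+1) => hsym x (m r) (l (c : ℕ))) 0 j = 0 := by
        intro j hj
        show hsym x (m 0) (l (j : ℕ)) = 0
        have hjpos : 0 < (j : ℕ) := by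
          rcases Nat.eq_zero_or_pos (j : ℕ) with h | h
          · exact absurd (Fin.ext h) hj
          · exact h
        have : 0 < l (j : ℕ) := lt_of_le_of_lt (by omega) (hl hjpos)
        obtain ⟨w, hw⟩ : ∃ w, l (j : ℕ) = w + 1 := ⟨l (j : ℕ) - 1, by omega⟩
        rw [hm0, hw, hsym_nil]
      rw [det_expand0 (fun r c : Fin (n'+1) => hsym x (m r) (l (c : ℕ))) h00 hrow]
      have hsub : (Matrix.submatrix (fun r c : Fin (n'+1) => hsym x (m r) (l (c : ℕ)))
          Fin.succ Fin.succ)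
          = (fun r c : Fin n' => hsym x ((fun r : Fin n' => m r.succ) r)
              ((fun c : ℕ => l (c + 1)) (c : ℕ))) := by
        funext r c
        simp [Matrix.submatrix_apply, Fin.val_succ]
        rfl
      rw [hsub]
      have hm' : StrictMono (fun r : Fin n' => m r.succ) :=
        fun a b hab => hm (by simpa using hab)
      have hl' : StrictMono (fun c : ℕ => l (c + 1)) :=
        fun a b hab => hl (by omega)
      have hNsum : ∑ r : Fin (n'+1), m r = m 0 + ∑ r : Fin n', m r.succ :=
        Fin.sum_univ_succ m
      have hmeas : n' + ∑ r : Fin n', m r.succ ≤ N - 1 := by omega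
      have hres := IH (N-1) (by omega) n' (fun r => m r.succ) (fun c => l (c+1)) x
        hm' hl' hx hmeas
      have hpos := hres.2 (by
        intro h
        right
        show 1 ≤ m (Fin.succ ⟨0, h⟩)
        have := hm (show (0 : Fin (n'+1)) < Fin.succ ⟨0, h⟩ by
          rw [Fin.lt_def]; simp)
        omega)
      exact ⟨le_of_lt hpos, fun _ => hpos⟩
    · -- first row is zero
      have hz : Matrix.det (fun r c : Fin (n'+1) => hsym x (m r) (l (c : ℕ))) = 0 := by
        apply Matrix.det_eq_zero_of_row_eq_zero 0
        intro j
        show hsym x (m 0) (l (j : ℕ)) = 0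
        have : 0 < l (j : ℕ) := by
          rcases Nat.eq_zero_or_pos (j : ℕ) with h | h
          · rw [h]; omega
          · exact lt_of_le_of_lt (by omega) (hl h)
        obtain ⟨w, hw⟩ : ∃ w, l (j : ℕ) = w + 1 := ⟨l (j : ℕ) - 1, by omega⟩
        rw [hm0, hw, hsym_nil]
      refine ⟨le_of_eq hz.symm, ?_⟩
      intro hcond
      rcases hcond (by omega) with h | h
      · exact absurd h hl0
      · rw [Fin.mk_zero] at h
        omega
  · -- all rows contain x 0
    have hm1 : ∀ r, 1 ≤ m r := by
      intro r
      have := hm.monotone (Fin.zero_le r)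
      omega
    have hx' : ∀ i, 0 < (fun i => x (i+1)) i := fun i => hx (i+1)
    have hmono' : StrictMono (fun r : Fin (n'+1) => m r - 1) := by
      intro a b hab
      show m a - 1 < m b - 1
      have := hm hab
      have := hm1 a
      omega
    have hsumm : ∑ r : Fin (n'+1), m r = (∑ r : Fin (n'+1), (m r - 1)) + (n'+1) := by
      have : ∀ r : Fin (n'+1), m r = (m r - 1) + 1 := fun r => by have := hm1 r; omega
      calc ∑ r : Fin (n'+1), m r = ∑ r : Fin (n'+1), ((m r - 1) + 1) :=
            Finset.sum_congr rfl (fun r _ => this r)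
        _ = (∑ r : Fin (n'+1), (m r - 1)) + ∑ _r : Fin (n'+1), 1 := Finset.sum_add_distrib
        _ = (∑ r : Fin (n'+1), (m r - 1)) + (n'+1) := by simp
    have OIHfull : ∀ k : ℕ → ℕ, StrictMono k →
        0 ≤ Matrix.det (fun r c : Fin (n'+1) =>
            hsym (fun i => x (i+1)) ((fun r : Fin (n'+1) => m r - 1) r) (k (c : ℕ))) ∧
        ((∀ h : 0 < n'+1, k 0 = 0 ∨ 1 ≤ m ⟨0, h⟩ - 1) →
          0 < Matrix.det (fun r c : Fin (n'+1) =>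
            hsym (fun i => x (i+1)) ((fun r : Fin (n'+1) => m r - 1) r) (k (c : ℕ)))) := by
      intro k hk
      exact IH (∑ r : Fin (n'+1), m r) (by omega) (n'+1) (fun r => m r - 1) k
        (fun i => x (i+1)) hmono' hk hx'
        (by show (n'+1) + ∑ r : Fin (n'+1), (m r - 1) ≤ ∑ r : Fin (n'+1), m r; omega)
    have hconv : ∀ k : ℕ → ℕ, Bmat (n'+1) x m 0 k
        = fun r c : Fin (n'+1) =>
            hsym (fun i => x (i+1)) ((fun r : Fin (n'+1) => m r - 1) r) (k (c : ℕ)) := by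
      intro k
      funext r c
      simp [Bmat]
    have OIH0 : ∀ k : ℕ → ℕ, StrictMono k → 0 ≤ (Bmat (n'+1) x m 0 k).det := by
      intro k hk
      rw [hconv k]
      exact (OIHfull k hk).1
    have hBn : (fun r c : Fin (n'+1) => hsym x (m r) (l (c : ℕ)))
        = Bmat (n'+1) x m (n'+1) l := by
      funext r c
      simp only [Bmat]
      rw [if_pos c.isLt]
    have hpos : 0 < Matrix.det (fun r c : Fin (n'+1) => hsym x (m r) (l (c : ℕ))) := by
      rw [hBn]
      refine inner_chain (n'+1) x m hx hm1 OIH0 (n'+1) le_rfl l hl ?_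
      rw [hconv]
      refine (OIHfull (finalize (n'+1) l) (finalize_strictMono _ hl)).2 ?_
      intro h
      left
      show finalize (n'+1) l 0 = 0
      simp [finalize]
    exact ⟨le_of_lt hpos, fun _ => hpos⟩

theorem stmt2 (n : ℕ) (hn : 1 ≤ n) (m' : Fin n → ℕ) (hmono : StrictMono m')
    (x : ℕ → ℝ) (hx : ∀ i, 0 < x i) :
    0 < Matrix.det (fun r c : Fin n => hsym x (m' r) (c : ℕ)) := by
  have := (outer (n + ∑ r, m' r) n m' (fun c => c) x hmono strictMono_id hx le_rfl).2
    (fun h => Or.inl rfl)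
  exact this
end

section
/- Let κ ∈ (0,1) be rational. For every integer m ≥ 0 and every n ≥ 0, Γ⁽ⁿ⁾(−m + κ) = Σ_{ℓ=0}^n T⁻_{n,ℓ}(−m+κ) Γ⁽ℓ⁾(κ), where T⁻_{n,ℓ}(−m+κ) = (Γ(−m+κ)/Γ(κ)) · (n!/ℓ!) · h_{n−ℓ}(1/(1−κ), 1/(2−κ), …, 1/(m−κ)), and each T⁻_{n,ℓ}(−m+κ) is rational. -/
open Finset

/-- `T⁻_{n,ℓ}(−m+κ) = (Γ(−m+κ)/Γ(κ))·(n!/ℓ!)·h_{n−ℓ}(1/(1−κ),1/(2−κ),…,1/(m−κ))`. -/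
noncomputable def Tminus (κ : ℚ) (n ℓ m : ℕ) : ℝ :=
  (Real.Gamma (-(m : ℝ) + (κ : ℝ)) / Real.Gamma (κ : ℝ)) * (((Nat.factorial n) : ℝ) / ((Nat.factorial ℓ) : ℝ)) *
    hsym (fun i => 1 / ((i : ℝ) + 1 - (κ : ℝ))) m (n - ℓ)

lemma hsym_zero_succ (x : ℕ → ℝ) (v : ℕ) : hsym x 0 (v + 1) = 0 := by
  simp [hsym]

lemma hsym_rec (x : ℕ → ℝ) (k v : ℕ) :
    hsym x (k + 1) (v + 1) = hsym x k (v + 1) + x k * hsym x (k + 1) v := by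
  classical
  unfold hsym
  rw [Finset.mul_sum]
  conv_lhs => rw [← Finset.sum_filter_add_sum_filter_not ((Finset.range (k+1)).sym (v+1))
      (fun s => k ∈ s), add_comm]
  congr 1
  · apply Finset.sum_congr _ (fun _ _ => rfl)
    ext s
    simp only [Finset.mem_filter, Finset.mem_sym_iff, Finset.mem_range]
    constructor
    · rintro ⟨hs, hk⟩ a ha
      exact lt_of_le_of_ne (Nat.lt_succ_iff.mp (hs a ha)) (fun h => hk (h ▸ ha))
    · intro hs
      exact ⟨fun a ha => (hs a ha).trans (Nat.lt_succ_self k),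
        fun hk => absurd (hs k hk) (lt_irrefl k)⟩
  · have himg : ((Finset.range (k+1)).sym (v+1)).filter (fun s => k ∈ s)
        = ((Finset.range (k+1)).sym v).image (Sym.cons k) := by
      ext s
      simp only [Finset.mem_filter, Finset.mem_image, Finset.mem_sym_iff]
      constructor
      · rintro ⟨hs, hk⟩
        exact ⟨s.erase k hk, fun a ha => hs a (Multiset.mem_of_mem_erase ha),
          Sym.cons_erase hk⟩
      · rintro ⟨t, ht, rfl⟩
        refine ⟨fun a ha => ?_, Sym.mem_cons_self _ _⟩
        rcases Sym.mem_cons.mp ha with h | ha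
        · rw [h]; exact Finset.self_mem_range_succ k
        · exact ht a ha
    rw [himg, Finset.sum_image (fun a _ b _ h => (Sym.cons_inj_right k a b).mp h)]
    refine Finset.sum_congr rfl fun t _ => ?_
    rw [Sym.coe_cons, Multiset.map_cons, Multiset.prod_cons]

noncomputable def SR : Set ℝ := (Set.range ((↑) : ℤ → ℝ))ᶜ

lemma isOpen_SR : IsOpen SR := Int.isClosedEmbedding_coe_real.isClosed_range.isOpen_compl

lemma gammaC : AnalyticOnNhd ℂ Complex.Gamma ((Set.range ((↑) : ℤ → ℂ))ᶜ) := by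
  apply DifferentiableOn.analyticOnNhd _ Complex.isClosed_range_intCast.isOpen_compl
  intro z hz
  refine (Complex.differentiableAt_Gamma z (fun m hm => hz ⟨-m, ?_⟩)).differentiableWithinAt
  push_cast [hm]; ring

lemma gammaR : AnalyticOnNhd ℝ Real.Gamma SR := by
  have hre : Real.Gamma = fun x : ℝ => (Complex.Gamma (x : ℂ)).re := by
    funext x; rw [Complex.Gamma_ofReal, Complex.ofReal_re]
  intro x hx
  have hx' : (x : ℂ) ∈ (Set.range ((↑) : ℤ → ℂ))ᶜ := by
    rintro ⟨k, hk⟩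
    exact hx ⟨k, by exact_mod_cast hk⟩ |>.elim
  rw [hre]
  exact (Complex.reCLM.analyticAt _).comp
    (((gammaC _ hx').restrictScalars).comp (Complex.ofRealCLM.analyticAt x))

lemma iterAnalytic (n : ℕ) : AnalyticOnNhd ℝ (iteratedDeriv n Real.Gamma) SR := by
  induction n with
  | zero => exact gammaR
  | succ n ih => rw [iteratedDeriv_succ]; exact ih.deriv_of_isOpen isOpen_SR

lemma mulId (n : ℕ) : ∀ x ∈ SR, iteratedDeriv n (fun y => y * Real.Gamma y) x
    = x * iteratedDeriv n Real.Gamma x + n * iteratedDeriv (n - 1) Real.Gamma x := by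
  induction n with
  | zero => intro x hx; simp
  | succ n ih =>
    intro x hx
    rw [iteratedDeriv_succ]
    have hev : iteratedDeriv n (fun y => y * Real.Gamma y) =ᶠ[nhds x]
        fun y => y * iteratedDeriv n Real.Gamma y + n * iteratedDeriv (n-1) Real.Gamma y :=
      Filter.eventually_of_mem (isOpen_SR.mem_nhds hx) ih
    rw [hev.deriv_eq]
    have h1 : DifferentiableAt ℝ (iteratedDeriv n Real.Gamma) x :=
      ((iterAnalytic n) x hx).differentiableAt
    have h2 : DifferentiableAt ℝ (iteratedDeriv (n-1) Real.Gamma) x :=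
      ((iterAnalytic (n-1)) x hx).differentiableAt
    rw [deriv_fun_add (differentiableAt_fun_id.fun_mul h1) (h2.const_mul _),
      deriv_fun_mul differentiableAt_fun_id h1, deriv_const_mul _ h2]
    have e1 : deriv (iteratedDeriv n Real.Gamma) x = iteratedDeriv (n+1) Real.Gamma x := by
      rw [iteratedDeriv_succ]
    rw [e1, deriv_id'']
    cases n with
    | zero => simp; ring
    | succ k =>
      have e2 : deriv (iteratedDeriv (k+1-1) Real.Gamma) x = iteratedDeriv (k+1) Real.Gamma x := by
        simp only [Nat.add_sub_cancel, ← iteratedDeriv_succ]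
      rw [e2]
      simp only [Nat.add_sub_cancel]
      push_cast
      ring

lemma gamma_step (n : ℕ) (x : ℝ) (hx : x ∈ SR) :
    iteratedDeriv n Real.Gamma (x + 1)
      = x * iteratedDeriv n Real.Gamma x + n * iteratedDeriv (n - 1) Real.Gamma x := by
  have hEq : Set.EqOn (fun y => Real.Gamma (y + 1)) (fun y => y * Real.Gamma y) SR := by
    intro y hy
    exact Real.Gamma_add_one (fun h => hy ⟨0, by simp [h]⟩)
  calc iteratedDeriv n Real.Gamma (x + 1)
      = iteratedDeriv n (fun y => Real.Gamma (y + 1)) x := by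
        rw [iteratedDeriv_comp_add_const]
    _ = iteratedDeriv n (fun y => y * Real.Gamma y) x :=
        hEq.iteratedDeriv_of_isOpen isOpen_SR n hx
    _ = _ := mulId n x hx

section Main
variable {κ : ℚ} (h0 : 0 < κ) (h1 : κ < 1)
include h0 h1

lemma hmem (m : ℕ) : (-(m : ℝ) + (κ : ℝ)) ∈ SR := by
  rintro ⟨k, hk⟩
  have hκ : (κ : ℝ) = ((k + m : ℤ) : ℝ) := by push_cast; linarith
  have hl : (0 : ℝ) < ((k + m : ℤ) : ℝ) := by rw [← hκ]; exact_mod_cast h0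
  have hu : ((k + m : ℤ) : ℝ) < 1 := by rw [← hκ]; exact_mod_cast h1
  have hl' : (0 : ℤ) < k + m := by exact_mod_cast hl
  have hu' : (k + m : ℤ) < 1 := by exact_mod_cast hu
  omega

lemma hX_ne (m : ℕ) : (-(m : ℝ) + (κ : ℝ)) ≠ 0 := by
  intro h
  exact hmem h0 h1 m ⟨0, by simp [h.symm]⟩

lemma gammaRel (m : ℕ) :
    Real.Gamma (-(m : ℝ) + (κ : ℝ))
      = (-((m + 1 : ℕ) : ℝ) + (κ : ℝ)) * Real.Gamma (-((m + 1 : ℕ) : ℝ) + (κ : ℝ)) := by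
  have h := Real.Gamma_add_one (hX_ne h0 h1 (m + 1))
  have he : (-((m + 1 : ℕ) : ℝ) + (κ : ℝ)) + 1 = -(m : ℝ) + (κ : ℝ) := by push_cast; ring
  rw [he] at h
  exact h

lemma hden_ne (m : ℕ) : ((m : ℝ) + 1 - (κ : ℝ)) ≠ 0 := by
  have : (κ : ℝ) < 1 := by exact_mod_cast h1
  have : (0:ℝ) ≤ (m:ℝ) := Nat.cast_nonneg m
  nlinarith

lemma coef_diag (n m : ℕ) :
    (-((m + 1 : ℕ) : ℝ) + (κ : ℝ)) * Tminus κ n n (m + 1) = Tminus κ n n m := by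
  unfold Tminus
  rw [Nat.sub_self, hsym_zero, hsym_zero, gammaRel h0 h1 m]
  push_cast
  ring

lemma coef_off (n ℓ m : ℕ) (hl : ℓ < n) :
    (-((m + 1 : ℕ) : ℝ) + (κ : ℝ)) * Tminus κ n ℓ (m + 1)
      = Tminus κ n ℓ m - n * Tminus κ (n - 1) ℓ (m + 1) := by
  obtain ⟨v, hv⟩ : ∃ v, n - ℓ = v + 1 := ⟨n - ℓ - 1, by omega⟩
  have hv' : n - 1 - ℓ = v := by omega
  unfold Tminus
  rw [hv, hv', hsym_rec, gammaRel h0 h1 m]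
  have hfac : ((Nat.factorial n : ℝ)) = n * (Nat.factorial (n - 1) : ℝ) := by
    have : n = (n - 1) + 1 := by omega
    rw [this, Nat.factorial_succ]
    push_cast
    ring
  rw [hfac]
  have hκΓ : Real.Gamma (κ : ℝ) ≠ 0 := ne_of_gt (Real.Gamma_pos_of_pos (by exact_mod_cast h0))
  have hd := hden_ne h0 h1 m
  have hfl : ((Nat.factorial ℓ : ℝ)) ≠ 0 := Nat.cast_ne_zero.mpr (Nat.factorial_ne_zero ℓ)
  have hXy : (-((m + 1 : ℕ) : ℝ) + (κ : ℝ)) * (1 / ((m : ℝ) + 1 - (κ : ℝ))) = -1 := by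
    field_simp
    push_cast
    ring
  field_simp
  push_cast
  ring

lemma part1 : ∀ m n : ℕ,
    iteratedDeriv n Real.Gamma (-(m : ℝ) + (κ : ℝ)) =
      ∑ ℓ ∈ Finset.range (n + 1), Tminus κ n ℓ m * iteratedDeriv ℓ Real.Gamma (κ : ℝ) := by
  have hκΓ : Real.Gamma (κ : ℝ) ≠ 0 := ne_of_gt (Real.Gamma_pos_of_pos (by exact_mod_cast h0))
  intro m
  induction m with
  | zero =>
    intro n
    rw [Finset.sum_eq_single_of_mem n (Finset.self_mem_range_succ n)]
    · simp only [Nat.cast_zero, neg_zero, zero_add]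
      unfold Tminus
      rw [Nat.sub_self, hsym_zero, Nat.cast_zero, neg_zero, zero_add,
        div_self hκΓ, div_self (Nat.cast_ne_zero.mpr (Nat.factorial_ne_zero n))]
      ring
    · intro ℓ hℓ hne
      have : n - ℓ = (n - ℓ - 1) + 1 := by
        have := Finset.mem_range.mp hℓ; omega
      unfold Tminus
      rw [this, hsym_zero_succ]
      ring
  | succ m ih =>
    intro n
    induction n with
    | zero =>
      apply mul_left_cancel₀ (hX_ne h0 h1 (m+1))
      have hstep := gamma_step 0 _ (hmem h0 h1 (m+1))
      have he : (-((m + 1 : ℕ) : ℝ) + (κ : ℝ)) + 1 = -(m : ℝ) + (κ : ℝ) := by push_cast; ring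
      rw [he] at hstep
      rw [ih 0] at hstep
      simp only [Nat.cast_zero, zero_mul, add_zero, Finset.sum_range_succ,
        Finset.sum_range_zero, zero_add] at hstep
      rw [Finset.sum_range_succ, Finset.sum_range_zero, zero_add, ← mul_assoc,
        coef_diag h0 h1 0 m]
      exact hstep.symm
    | succ n ihn =>
      apply mul_left_cancel₀ (hX_ne h0 h1 (m+1))
      have hstep := gamma_step (n+1) _ (hmem h0 h1 (m+1))
      have he : (-((m + 1 : ℕ) : ℝ) + (κ : ℝ)) + 1 = -(m : ℝ) + (κ : ℝ) := by push_cast; ring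
      rw [he, Nat.add_sub_cancel] at hstep
      -- hstep : iterD (n+1) Γ (x_m) = X * iterD (n+1) Γ X + (n+1) * iterD n Γ X
      have key : (-((m + 1 : ℕ) : ℝ) + (κ : ℝ)) * iteratedDeriv (n+1) Real.Gamma (-((m + 1 : ℕ) : ℝ) + (κ : ℝ))
          = iteratedDeriv (n+1) Real.Gamma (-(m : ℝ) + (κ : ℝ))
            - ((n:ℝ)+1) * iteratedDeriv n Real.Gamma (-((m + 1 : ℕ) : ℝ) + (κ : ℝ)) := by
        rw [hstep]; push_cast; ring
      rw [Finset.mul_sum, key, ih (n+1), ihn]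
      rw [Finset.mul_sum]
      have hext : ∑ ℓ ∈ Finset.range (n + 1),
            ((n:ℝ)+1) * (Tminus κ n ℓ (m+1) * iteratedDeriv ℓ Real.Gamma (κ : ℝ))
          = ∑ ℓ ∈ Finset.range (n + 2),
            (if ℓ = n + 1 then 0 else ((n:ℝ)+1) * Tminus κ n ℓ (m+1)) * iteratedDeriv ℓ Real.Gamma (κ : ℝ) := by
        conv_rhs => rw [Finset.sum_range_succ]
        rw [if_pos rfl, zero_mul, add_zero]
        refine Finset.sum_congr rfl fun ℓ hℓ => ?_
        rw [if_neg (by have := Finset.mem_range.mp hℓ; omega)]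
        ring
      rw [hext, ← Finset.sum_sub_distrib]
      refine Finset.sum_congr rfl fun ℓ hℓ => ?_
      have hℓ' := Finset.mem_range.mp hℓ
      rcases eq_or_lt_of_le (Nat.lt_succ_iff.mp hℓ') with heq | hlt
      · rw [heq, if_pos rfl, zero_mul, sub_zero, ← mul_assoc, coef_diag h0 h1 (n+1) m]
      · rw [if_neg (by omega), ← mul_assoc]
        rw [coef_off h0 h1 (n+1) ℓ (m) (by omega)]
        have : (n + 1) - 1 = n := rfl
        rw [this]
        push_cast
        ring

lemma ratGamma : ∀ m : ℕ, ∃ q : ℚ, Real.Gamma (-(m : ℝ) + (κ : ℝ)) / Real.Gamma (κ : ℝ) = (q : ℝ) := by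
  intro m
  induction m with
  | zero =>
    exact ⟨1, by simp [div_self (ne_of_gt (Real.Gamma_pos_of_pos (show (0:ℝ) < κ by exact_mod_cast h0)))]⟩
  | succ m ih =>
    obtain ⟨q, hq⟩ := ih
    refine ⟨q / (-(m + 1 : ℚ) + κ), ?_⟩
    have hX := hX_ne h0 h1 (m+1)
    have hrel := gammaRel h0 h1 m
    have hXq : (-((m + 1 : ℕ) : ℝ) + (κ : ℝ)) = ((-(m + 1 : ℚ) + κ : ℚ) : ℝ) := by push_cast; ring
    have hXq0 : ((-(m + 1 : ℚ) + κ : ℚ) : ℝ) ≠ 0 := hXq ▸ hX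
    rw [Rat.cast_div, ← hXq]
    rw [eq_div_iff (hXq ▸ hXq0), ← hq, hrel]
    push_cast
    ring

lemma ratH : ∀ k v : ℕ, ∃ q : ℚ, hsym (fun i => 1 / ((i : ℝ) + 1 - (κ : ℝ))) k v = (q : ℝ) := by
  intro k
  induction k with
  | zero =>
    intro v
    cases v with
    | zero => exact ⟨1, by rw [hsym_zero]; norm_num⟩
    | succ v => exact ⟨0, by rw [hsym_zero_succ]; norm_num⟩
  | succ k ih =>
    intro v
    induction v with
    | zero => exact ⟨1, by rw [hsym_zero]; norm_num⟩
    | succ v ihv =>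
      obtain ⟨q1, hq1⟩ := ih (v+1)
      obtain ⟨q2, hq2⟩ := ihv
      refine ⟨q1 + (1 / ((k : ℚ) + 1 - κ)) * q2, ?_⟩
      rw [hsym_rec, hq1, hq2]
      push_cast
      ring

lemma part2 : ∀ n ℓ m : ℕ, ∃ q : ℚ, Tminus κ n ℓ m = (q : ℝ) := by
  intro n ℓ m
  obtain ⟨q1, hq1⟩ := ratGamma h0 h1 m
  obtain ⟨q2, hq2⟩ := ratH h0 h1 m (n - ℓ)
  refine ⟨q1 * ((Nat.factorial n : ℚ) / (Nat.factorial ℓ : ℚ)) * q2, ?_⟩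
  unfold Tminus
  rw [hq1, hq2]
  push_cast
  ring

end Main

theorem stmt12 (κ : ℚ) (h0 : 0 < κ) (h1 : κ < 1) :
    (∀ m n : ℕ,
      iteratedDeriv n Real.Gamma (-(m : ℝ) + (κ : ℝ)) =
        ∑ ℓ ∈ Finset.range (n + 1), Tminus κ n ℓ m * iteratedDeriv ℓ Real.Gamma (κ : ℝ)) ∧
    (∀ n ℓ m : ℕ, ∃ q : ℚ, Tminus κ n ℓ m = (q : ℝ)) := by
  exact ⟨part1 h0 h1, part2 h0 h1⟩
end

section
/- Let κ ∈ (0,1) be rational, n ≥ 0, and let 0 ≤ m_1 < m_2 < … < m_{n+1} be integers. Then the (n+1) × (n+1) matrix with (r, ℓ+1) entry T⁺_{n,ℓ}(m_r + κ) = (Γ(m_r+κ)/Γ(κ)) · (n!/ℓ!) · e_{n−ℓ}(1/κ, …, 1/(m_r−1+κ)) (for ℓ = 0, …, n) is nonsingular, with rational inverse. -/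
open Finset

/-- `T⁺_{n,ℓ}(m+κ) = (Γ(m+κ)/Γ(κ))·(n!/ℓ!)·e_{n−ℓ}(1/κ,1/(1+κ),…,1/(m−1+κ))`. -/
noncomputable def Tplus (κ : ℚ) (n ℓ m : ℕ) : ℝ :=
  (Real.Gamma ((m : ℝ) + (κ : ℝ)) / Real.Gamma (κ : ℝ)) * (((Nat.factorial n) : ℝ) / ((Nat.factorial ℓ) : ℝ)) *
    esym (fun i => 1 / ((i : ℝ) + (κ : ℝ))) m (n - ℓ)

open Polynomial


noncomputable def Cz (a : ℕ → ℝ) (m : ℕ) (c : ℤ) : ℝ :=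
  if 0 ≤ c then (∏ i ∈ Finset.range m, (X + C (a i))).coeff c.toNat else 0

lemma Cz_neg (a : ℕ → ℝ) (m : ℕ) {c : ℤ} (h : c < 0) : Cz a m c = 0 := by
  simp [Cz, not_le.mpr h]

lemma Cz_gt (a : ℕ → ℝ) (m : ℕ) {c : ℤ} (h : (m : ℤ) < c) : Cz a m c = 0 := by
  have h0 : (0:ℤ) ≤ c := le_of_lt (lt_of_le_of_lt (Int.ofNat_nonneg m) h)
  rw [Cz, if_pos h0]
  apply Polynomial.coeff_eq_zero_of_natDegree_lt
  have hd : (∏ i ∈ Finset.range m, (X + C (a i))).natDegree ≤ m := by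
    refine le_trans (Polynomial.natDegree_prod_le _ _) ?_
    simp [Polynomial.natDegree_X_add_C]
  omega

lemma Cz_eq_sum (a : ℕ → ℝ) (m : ℕ) {c : ℤ} (h0 : 0 ≤ c) (hm : c ≤ (m:ℤ)) :
    Cz a m c = ∑ t ∈ (Finset.range m).powersetCard (m - c.toNat), ∏ i ∈ t, a i := by
  rw [Cz, if_pos h0]
  rw [Finset.prod_X_add_C_coeff]
  · simp
  · simp; omega

lemma Cz_pos {a : ℕ → ℝ} (ha : ∀ i, 0 < a i) (m : ℕ) {c : ℤ} (h0 : 0 ≤ c) (hm : c ≤ (m:ℤ)) :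
    0 < Cz a m c := by
  rw [Cz_eq_sum a m h0 hm]
  apply Finset.sum_pos
  · intro t _ht
    exact Finset.prod_pos (fun i _ => ha i)
  · apply Finset.powersetCard_nonempty.mpr
    simp

lemma Cz_nonneg {a : ℕ → ℝ} (ha : ∀ i, 0 < a i) (m : ℕ) (c : ℤ) : 0 ≤ Cz a m c := by
  rcases lt_or_ge c 0 with h | h
  · rw [Cz_neg a m h]
  rcases le_or_gt c (m:ℤ) with h2 | h2
  · exact le_of_lt (Cz_pos ha m h h2)
  · rw [Cz_gt a m h2]

lemma Cz_rec (a : ℕ → ℝ) (m : ℕ) (c : ℤ) :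
    Cz a (m+1) c = Cz (fun i => a (i+1)) m (c-1) + a 0 * Cz (fun i => a (i+1)) m c := by
  rcases lt_trichotomy c 0 with h | h | h
  · rw [Cz_neg _ _ h, Cz_neg _ _ (by omega), Cz_neg _ _ h]; ring
  · subst h
    simp only [Cz]
    rw [if_pos (le_refl (0:ℤ)), if_neg (by norm_num : ¬ (0:ℤ) ≤ 0 - 1),
      if_pos (le_refl (0:ℤ))]
    rw [Finset.prod_range_succ']
    simp only [Int.toNat_zero, Polynomial.mul_coeff_zero]
    simp [mul_comm]
  · have h1 : (0:ℤ) ≤ c := le_of_lt h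
    have h2 : (0:ℤ) ≤ c - 1 := by omega
    simp only [Cz, if_pos h1, if_pos h2]
    rw [Finset.prod_range_succ']
    have hto : c.toNat = (c-1).toNat + 1 := by omega
    rw [hto]
    set q := ∏ i ∈ Finset.range m, (X + C (a (i+1))) with hq
    rw [mul_add, Polynomial.coeff_add, Polynomial.coeff_mul_X, Polynomial.coeff_mul_C]
    ring

lemma master : ∀ (k : ℕ) (a : ℕ → ℝ), (∀ i, 0 < a i) → ∀ (m : Fin k → ℕ) (c : Fin k → ℤ),
    StrictMono m → StrictMono c →
    0 ≤ Matrix.det (fun j r => Cz a (m r) (c j)) ∧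
    ((∀ j, 0 ≤ c j ∧ c j ≤ (m j : ℤ)) → 0 < Matrix.det (fun j r => Cz a (m r) (c j))) := by
  intro k
  induction k with
  | zero =>
    intro a ha m c _ _
    constructor
    · rw [show Matrix.det (fun j r => Cz a (m r) (c j)) = 1 from Matrix.det_fin_zero]; norm_num
    · intro _; rw [show Matrix.det (fun j r => Cz a (m r) (c j)) = 1 from Matrix.det_fin_zero]; norm_num
  | succ k IH =>
    suffices H : ∀ (N : ℕ) (a : ℕ → ℝ), (∀ i, 0 < a i) → ∀ (m : Fin (k+1) → ℕ) (c : Fin (k+1) → ℤ),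
        StrictMono m → StrictMono c → m 0 = N →
        0 ≤ Matrix.det (fun j r => Cz a (m r) (c j)) ∧
        ((∀ j, 0 ≤ c j ∧ c j ≤ (m j : ℤ)) → 0 < Matrix.det (fun j r => Cz a (m r) (c j))) by
      intro a ha m c hm hc
      exact H (m 0) a ha m c hm hc rfl
    intro N
    induction N with
    | zero =>
      intro a ha m c hm hc hm0
      rcases lt_trichotomy (c 0) 0 with h | h | h
      · have hz : Matrix.det (fun j r => Cz a (m r) (c j)) = 0 :=
          Matrix.det_eq_zero_of_row_eq_zero 0 (fun r => Cz_neg a (m r) h)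
        exact ⟨le_of_eq hz.symm, fun hcond => absurd (hcond 0).1 (not_le.mpr h)⟩
      · have hrow : ∀ j : Fin (k+1), Cz a (m 0) (c j) = if j = 0 then 1 else 0 := by
          intro j
          rcases eq_or_ne j 0 with rfl | hj
          · rw [if_pos rfl, hm0]
            simp [Cz, h]
          · rw [if_neg hj, hm0]
            apply Cz_gt
            have : c 0 < c j := hc (Fin.pos_of_ne_zero hj)
            omega
        have hexp : Matrix.det (fun j r => Cz a (m r) (c j))
            = Matrix.det (fun j r : Fin k => Cz a (m r.succ) (c j.succ)) := by
          refine (Matrix.det_succ_column_zero _).trans ?_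
          rw [Finset.sum_eq_single 0]
          · simp only [Fin.val_zero, pow_zero, one_mul, Fin.succAbove_zero]
            rw [hrow 0, if_pos rfl, one_mul]
            rfl
          · intro i _ hi
            rw [hrow i, if_neg hi]; ring
          · intro h; exact absurd (Finset.mem_univ _) h
        have := IH a ha (fun r => m r.succ) (fun j => c j.succ)
          (hm.comp Fin.strictMono_succ) (hc.comp Fin.strictMono_succ)
        rw [hexp]
        exact ⟨this.1, fun hcond => this.2 (fun j => hcond j.succ)⟩
      · have hz : Matrix.det (fun j r => Cz a (m r) (c j)) = 0 := by
          apply Matrix.det_eq_zero_of_column_eq_zero 0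
          intro j
          rw [hm0]; apply Cz_gt
          have : c 0 ≤ c j := hc.monotone (Fin.zero_le j)
          omega
        refine ⟨le_of_eq hz.symm, fun hcond => ?_⟩
        have h1 := (hcond 0).2
        rw [hm0] at h1
        omega
    | succ N IHN =>
      intro a ha m c hm hc hm0
      classical
      set a' : ℕ → ℝ := fun i => a (i+1) with ha'
      have ha'pos : ∀ i, 0 < a' i := fun i => ha (i+1)
      have hm1 : ∀ r, 1 ≤ m r := by
        intro r
        have := hm.monotone (Fin.zero_le r); omega
      set m' : Fin (k+1) → ℕ := fun r => m r - 1 with hm'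
      have hm'mono : StrictMono m' := by
        intro r r' hr
        have h1 := hm hr
        have h2 := hm1 r
        simp only [m']; omega
      have hm'0 : m' 0 = N := by simp only [m', hm0]; omega
      have hrec : ∀ (j r : Fin (k+1)), Cz a (m r) (c j) = Cz a' (m' r) (c j - 1) + a 0 * Cz a' (m' r) (c j) := by
        intro j r
        have hmr : m r = m' r + 1 := by have := hm1 r; simp only [m']; omega
        rw [hmr, Cz_rec]
      have hdet : Matrix.det (fun j r => Cz a (m r) (c j))
          = ∑ s : Finset (Fin (k+1)), (a 0)^(s.card) *
              Matrix.det (fun j r => Cz a' (m' r) (if j ∈ s then c j else c j - 1)) := by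
        have huv : (fun j r => Cz a (m r) (c j))
            = ((fun j : Fin (k+1) => (a 0) • (fun r => Cz a' (m' r) (c j)))
                + (fun (j r : Fin (k+1)) => Cz a' (m' r) (c j - 1))) := by
          funext j r
          simp only [Pi.add_apply, Pi.smul_apply, smul_eq_mul, hrec j r]
          ring
        rw [huv]
        show Matrix.detRowAlternating.toMultilinearMap _ = _
        rw [MultilinearMap.map_add_univ]
        refine Finset.sum_congr rfl (fun s _ => ?_)
        have h1 : (s.piecewise (fun j : Fin (k+1) => (a 0) • (fun r => Cz a' (m' r) (c j)))
              (fun (j r : Fin (k+1)) => Cz a' (m' r) (c j - 1)))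
            = fun j : Fin (k+1) => (if j ∈ s then a 0 else 1) •
                (fun r => Cz a' (m' r) (if j ∈ s then c j else c j - 1)) := by
          funext j
          by_cases hj : j ∈ s
          · rw [Finset.piecewise_eq_of_mem _ _ _ hj]
            simp [hj]
          · rw [Finset.piecewise_eq_of_notMem _ _ _ hj]
            simp [hj]
        rw [h1, MultilinearMap.map_smul_univ]
        rw [Finset.prod_ite_mem Finset.univ s (fun _ => a 0), Finset.univ_inter,
          Finset.prod_const]
        rfl
      have hterm : ∀ s : Finset (Fin (k+1)),
          0 ≤ Matrix.det (fun j r => Cz a' (m' r) (if j ∈ s then c j else c j - 1)) := by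
        intro s
        have hmono : Monotone (fun j => if j ∈ s then c j else c j - 1) := by
          intro j j' hjj
          rcases eq_or_lt_of_le hjj with rfl | hlt
          · exact le_refl _
          · have h1 : c j + 1 ≤ c j' := hc hlt
            simp only
            split <;> split <;> omega
        by_cases hinj : Function.Injective (fun j => if j ∈ s then c j else c j - 1)
        · exact (IHN a' ha'pos m' _ hm'mono (hmono.strictMono_of_injective hinj) hm'0).1
        · rw [Function.not_injective_iff] at hinj
          obtain ⟨j, j', heq, hne⟩ := hinj
          refine le_of_eq (Matrix.det_zero_of_row_eq hne ?_).symm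
          have heq' : (if j ∈ s then c j else c j - 1) = (if j' ∈ s then c j' else c j' - 1) := heq
          funext r
          show Cz a' (m' r) _ = Cz a' (m' r) _
          rw [heq']
      constructor
      · rw [hdet]
        exact Finset.sum_nonneg (fun s _ => mul_nonneg (pow_nonneg (ha 0).le _) (hterm s))
      · intro hcond
        rw [hdet]
        apply Finset.sum_pos'
        · exact fun s _ => mul_nonneg (pow_nonneg (ha 0).le _) (hterm s)
        refine ⟨Finset.univ.filter (fun j => c j < (m j : ℤ)), Finset.mem_univ _, ?_⟩
        set s : Finset (Fin (k+1)) := Finset.univ.filter (fun j => c j < (m j : ℤ)) with hs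
        have hmem : ∀ j, j ∈ s ↔ c j < (m j : ℤ) := by
          intro j; simp [hs]
        apply mul_pos (pow_pos (ha 0) _)
        have hcast : ∀ j, (m' j : ℤ) = (m j : ℤ) - 1 := by
          intro j
          have := hm1 j
          simp only [m']
          omega
        have hsm : StrictMono (fun j => if j ∈ s then c j else c j - 1) := by
          intro j j' hlt
          have h1 : c j + 1 ≤ c j' := hc hlt
          have h2 : (m j : ℤ) + 1 ≤ (m j' : ℤ) := by exact_mod_cast hm hlt
          have h3 := (hcond j).2
          have h4 := (hcond j').2
          simp only [hmem]
          split <;> split <;> omega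
        refine (IHN a' ha'pos m' _ hm'mono hsm hm'0).2 (fun j => ?_)
        have h3 := (hcond j).1
        have h4 := (hcond j).2
        have h5 := hm1 j
        rw [hcast j]
        simp only [hmem]
        constructor
        · split <;> omega
        · split <;> omega

lemma Gamma_ratio (κr : ℝ) (hκ : 0 < κr) (M : ℕ) :
    Real.Gamma ((M : ℝ) + κr) = (∏ i ∈ Finset.range M, ((i:ℝ) + κr)) * Real.Gamma κr := by
  induction M with
  | zero => simp
  | succ M ih =>
    have h1 : ((M+1 : ℕ) : ℝ) + κr = ((M:ℝ) + κr) + 1 := by push_cast; ring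
    have h2 : (M:ℝ) + κr ≠ 0 := by positivity
    rw [h1, Real.Gamma_add_one h2, ih, Finset.prod_range_succ]
    ring

lemma esym_mul_eq_Cz (κr : ℝ) (hκ : 0 < κr) (M v : ℕ) :
    (∏ i ∈ Finset.range M, ((i:ℝ) + κr)) * esym (fun i => 1 / ((i : ℝ) + κr)) M v
      = Cz (fun i => (i:ℝ) + κr) M (v : ℤ) := by
  have hpos : ∀ i : ℕ, (0:ℝ) < (i:ℝ) + κr := fun i => by positivity
  rcases le_or_gt v M with hv | hv
  · rw [Cz_eq_sum _ _ (by positivity) (by exact_mod_cast hv)]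
    have htn : ((v : ℤ)).toNat = v := rfl
    rw [htn]
    rw [esym, Finset.mul_sum]
    refine Finset.sum_nbij' (fun S => Finset.range M \ S) (fun t => Finset.range M \ t)
      ?_ ?_ ?_ ?_ ?_
    · intro S hS
      rw [Finset.mem_powersetCard] at hS ⊢
      refine ⟨Finset.sdiff_subset, ?_⟩
      rw [Finset.card_sdiff_of_subset hS.1, Finset.card_range, hS.2]
    · intro t ht
      rw [Finset.mem_powersetCard] at ht ⊢
      refine ⟨Finset.sdiff_subset, ?_⟩
      rw [Finset.card_sdiff_of_subset ht.1, Finset.card_range, ht.2]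
      omega
    · intro S hS
      rw [Finset.mem_powersetCard] at hS
      exact Finset.sdiff_sdiff_eq_self hS.1
    · intro t ht
      rw [Finset.mem_powersetCard] at ht
      exact Finset.sdiff_sdiff_eq_self ht.1
    · intro S hS
      rw [Finset.mem_powersetCard] at hS
      have hsplit : (∏ i ∈ Finset.range M, ((i:ℝ) + κr))
          = (∏ i ∈ Finset.range M \ S, ((i:ℝ) + κr)) * ∏ i ∈ S, ((i:ℝ) + κr) :=
        (Finset.prod_sdiff hS.1).symm
      have hone : (∏ i ∈ S, ((i:ℝ) + κr)) * ∏ i ∈ S, (1/((i:ℝ) + κr)) = 1 := by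
        rw [← Finset.prod_mul_distrib]
        apply Finset.prod_eq_one
        intro i _
        have := (hpos i).ne'
        field_simp
      rw [hsplit, mul_assoc, hone, mul_one]
  · rw [Cz_gt _ _ (by exact_mod_cast hv)]
    rw [esym, Finset.powersetCard_eq_empty.mpr (by simpa using hv), Finset.sum_empty, mul_zero]

theorem stmt13 (κ : ℚ) (h0 : 0 < κ) (h1 : κ < 1) (n : ℕ)
    (m : Fin (n + 1) → ℕ) (hmono : StrictMono m) :
    Matrix.det (fun r ℓ : Fin (n + 1) => Tplus κ n (ℓ : ℕ) (m r)) ≠ 0 ∧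
    ∀ i j : Fin (n + 1),
      ∃ q : ℚ,
        (fun r ℓ : Fin (n + 1) => Tplus κ n (ℓ : ℕ) (m r) :
          Matrix (Fin (n + 1)) (Fin (n + 1)) ℝ)⁻¹ i j = (q : ℝ) := by
  have hκ : (0:ℝ) < (κ:ℝ) := by exact_mod_cast h0
  have hΓ : Real.Gamma (κ:ℝ) ≠ 0 := (Real.Gamma_pos_of_pos hκ).ne'
  have hapos : ∀ i : ℕ, (0:ℝ) < (i:ℝ) + (κ:ℝ) := fun i => by positivity
  have hentry : ∀ (M ℓ : ℕ), Tplus κ n ℓ M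
      = ((Nat.factorial n : ℝ) / (Nat.factorial ℓ : ℝ))
          * Cz (fun i => (i:ℝ) + (κ:ℝ)) M (((n - ℓ : ℕ)) : ℤ) := by
    intro M ℓ
    rw [Tplus, Gamma_ratio _ hκ, mul_div_cancel_right₀ _ hΓ,
      ← esym_mul_eq_Cz (κ:ℝ) hκ M (n - ℓ)]
    ring
  set A : Matrix (Fin (n+1)) (Fin (n+1)) ℝ := fun r ℓ => Tplus κ n (ℓ:ℕ) (m r) with hA
  have hAB : A = Matrix.of (fun r ℓ : Fin (n+1) =>
      ((Nat.factorial n : ℝ) / (Nat.factorial (ℓ:ℕ) : ℝ))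
        * Cz (fun i => (i:ℝ) + (κ:ℝ)) (m r) (((n - (ℓ:ℕ) : ℕ)) : ℤ)) := by
    funext r ℓ
    exact hentry (m r) (ℓ:ℕ)
  have hdetA : A.det = (∏ ℓ : Fin (n+1), ((Nat.factorial n : ℝ) / (Nat.factorial (ℓ:ℕ) : ℝ)))
      * Matrix.det (fun r ℓ : Fin (n+1) =>
          Cz (fun i => (i:ℝ) + (κ:ℝ)) (m r) (((n - (ℓ:ℕ) : ℕ)) : ℤ)) := by
    rw [hAB]; exact Matrix.det_mul_row _ _
  have hjm : ∀ j : Fin (n+1), (j:ℕ) ≤ m j := by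
    intro j
    induction j using Fin.induction with
    | zero => exact Nat.zero_le _
    | succ i ih =>
      have h2 := hmono (Fin.castSucc_lt_succ : Fin.castSucc i < i.succ)
      rw [Fin.val_succ]
      rw [Fin.coe_castSucc] at ih
      omega
  have hdetD : 0 < Matrix.det (fun j r : Fin (n+1) =>
      Cz (fun i => (i:ℝ) + (κ:ℝ)) (m r) (((j:ℕ) : ℤ))) := by
    refine (master (n+1) (fun i => (i:ℝ) + (κ:ℝ)) hapos m (fun j => ((j:ℕ):ℤ)) hmono ?_).2 ?_
    · intro j j' h
      show ((j:ℕ):ℤ) < ((j':ℕ):ℤ)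
      exact_mod_cast h
    · intro j
      exact ⟨Int.ofNat_nonneg _, by exact_mod_cast hjm j⟩
  have hdetB : Matrix.det (fun r ℓ : Fin (n+1) =>
      Cz (fun i => (i:ℝ) + (κ:ℝ)) (m r) (((n - (ℓ:ℕ) : ℕ)) : ℤ)) ≠ 0 := by
    have hBD : (fun r ℓ : Fin (n+1) => Cz (fun i => (i:ℝ) + (κ:ℝ)) (m r) (((n - (ℓ:ℕ) : ℕ)) : ℤ))
        = (Matrix.transpose (fun j r : Fin (n+1) => Cz (fun i => (i:ℝ) + (κ:ℝ)) (m r) (((j:ℕ) : ℤ)))).submatrix id Fin.revPerm := by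
      funext r ℓ
      show Cz _ (m r) (((n - (ℓ:ℕ) : ℕ)) : ℤ) = Cz _ (m r) (((Fin.revPerm ℓ : Fin (n+1)):ℕ) : ℤ)
      have h5 : ((Fin.revPerm ℓ : Fin (n+1)) : ℕ) = n - (ℓ:ℕ) := by
        have := Fin.val_rev ℓ
        simp only [Fin.revPerm_apply]
        omega
      rw [h5]
    rw [hBD, Matrix.det_permute', show Matrix.det (Matrix.transpose (fun j r : Fin (n+1) => Cz (fun i => (i:ℝ) + (κ:ℝ)) (m r) (((j:ℕ) : ℤ)))) = Matrix.det (fun j r : Fin (n+1) => Cz (fun i => (i:ℝ) + (κ:ℝ)) (m r) (((j:ℕ) : ℤ))) from Matrix.det_transpose _]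
    rcases Int.units_eq_one_or (Equiv.Perm.sign (Fin.revPerm : Equiv.Perm (Fin (n+1)))) with h | h <;>
      rw [h] <;> simp [hdetD.ne']
  have hdetA_ne : A.det ≠ 0 := by
    rw [hdetA]
    refine mul_ne_zero (Finset.prod_ne_zero_iff.mpr (fun ℓ _ => ?_)) hdetB
    have h1 := Nat.factorial_pos n
    have h2 := Nat.factorial_pos (ℓ:ℕ)
    positivity
  refine ⟨hdetA_ne, ?_⟩
  set Q : Matrix (Fin (n+1)) (Fin (n+1)) ℚ := fun r ℓ =>
    (∏ i ∈ Finset.range (m r), ((i:ℚ) + κ)) * ((Nat.factorial n : ℚ) / (Nat.factorial (ℓ:ℕ) : ℚ)) *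
      ∑ S ∈ (Finset.range (m r)).powersetCard (n - (ℓ:ℕ)), ∏ i ∈ S, 1/((i:ℚ) + κ) with hQ
  have hAQ : A = Q.map (Rat.castHom ℝ) := by
    funext r ℓ
    show Tplus κ n (ℓ:ℕ) (m r) = _
    rw [Tplus, Gamma_ratio _ hκ, mul_div_cancel_right₀ _ hΓ, esym]
    rw [Matrix.map_apply]
    simp only [hQ, Rat.coe_castHom]
    push_cast
    ring
  intro i j
  refine ⟨(Q i j)⁻¹, ?_⟩
  show (A i j)⁻¹ = (((Q i j)⁻¹ : ℚ) : ℝ)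
  rw [hAQ, Matrix.map_apply, Rat.coe_castHom, Rat.cast_inv]
end

section
/- Let κ ∈ (0,1) be rational with Γ(κ) transcendental. For every integer n ≥ 1, the set of integers m ≥ 0 such that Γ⁽ⁿ⁾(m + κ) is algebraic has at most n elements. -/
open Filter Set Topology Polynomial Finset Matrix

lemma complexGamma_analytic :
    AnalyticOnNhd ℂ Complex.Gamma {s : ℂ | 0 < s.re} := by
  apply DifferentiableOn.analyticOnNhd
  · intro s hs
    exact (Complex.differentiableAt_Gamma s (fun m => by
      intro h
      have hre : s.re ≤ 0 := by
        rw [h]; simp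
      exact absurd hs (by simpa using hre.not_gt))).differentiableWithinAt
  · exact isOpen_lt continuous_const Complex.continuous_re

lemma realGamma_analytic :
    AnalyticOnNhd ℝ Real.Gamma (Ioi (0:ℝ)) := by
  have h1 : AnalyticOnNhd ℝ (fun x : ℝ => (Complex.Gamma (x:ℂ)).re) (Ioi (0:ℝ)) := by
    have hre : AnalyticOnNhd ℝ (fun z : ℂ => z.re) univ :=
      Complex.reCLM.analyticOnNhd univ
    have hof : AnalyticOnNhd ℝ (fun x : ℝ => (x:ℂ)) (Ioi (0:ℝ)) :=
      (Complex.ofRealCLM.analyticOnNhd _)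
    have hg : AnalyticOnNhd ℝ Complex.Gamma {s : ℂ | 0 < s.re} :=
      complexGamma_analytic.restrictScalars
    exact hre.comp ((hg.comp hof) (fun x hx => by simpa using hx)) (fun x _ => trivial)
  exact h1

lemma realGamma_iter_analytic (n : ℕ) :
    AnalyticOnNhd ℝ (iteratedDeriv n Real.Gamma) (Ioi (0:ℝ)) := by
  induction n with
  | zero => simpa [iteratedDeriv_zero] using realGamma_analytic
  | succ n ih => simpa [iteratedDeriv_succ] using ih.deriv

section
variable {f g : ℝ → ℝ} {x : ℝ}

lemma eventuallyEq_iteratedDeriv (n : ℕ) (h : f =ᶠ[𝓝 x] g) :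
    iteratedDeriv n f =ᶠ[𝓝 x] iteratedDeriv n g := by
  induction n generalizing f g with
  | zero => simpa [iteratedDeriv_zero] using h
  | succ n ih =>
      rw [iteratedDeriv_succ', iteratedDeriv_succ']
      exact ih h.deriv
end



lemma diffIter (n : ℕ) {x : ℝ} (hx : 0 < x) :
    DifferentiableAt ℝ (iteratedDeriv n Real.Gamma) x :=
  ((realGamma_iter_analytic n) x hx).differentiableAt

lemma gamma_mul_iter : ∀ (ℓ : ℕ) (x : ℝ), 0 < x →
    iteratedDeriv ℓ (fun y => y * Real.Gamma y) x
      = x * iteratedDeriv ℓ Real.Gamma x + ℓ * iteratedDeriv (ℓ-1) Real.Gamma x := by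
  intro ℓ
  induction ℓ with
  | zero => intro x hx; simp
  | succ ℓ ih =>
      intro x hx
      rw [iteratedDeriv_succ]
      have hev : deriv (iteratedDeriv ℓ (fun y => y * Real.Gamma y)) x
          = deriv (fun y => y * iteratedDeriv ℓ Real.Gamma y
              + (ℓ:ℝ) * iteratedDeriv (ℓ-1) Real.Gamma y) x := by
        apply Filter.EventuallyEq.deriv_eq
        filter_upwards [Ioi_mem_nhds hx] with y hy
        exact ih y hy
      rw [hev]
      have hA : DifferentiableAt ℝ (iteratedDeriv ℓ Real.Gamma) x := diffIter ℓ hx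
      have hB : DifferentiableAt ℝ (iteratedDeriv (ℓ-1) Real.Gamma) x := diffIter _ hx
      have h1 : HasDerivAt (fun y => y * iteratedDeriv ℓ Real.Gamma y
            + (ℓ:ℝ) * iteratedDeriv (ℓ-1) Real.Gamma y)
          (iteratedDeriv ℓ Real.Gamma x + x * deriv (iteratedDeriv ℓ Real.Gamma) x
            + (ℓ:ℝ) * deriv (iteratedDeriv (ℓ-1) Real.Gamma) x) x := by
        have := ((hasDerivAt_id x).mul hA.hasDerivAt).add
          ((hB.hasDerivAt).const_mul (ℓ:ℝ))
        refine (this.congr_deriv (by simp)).congr_of_eventuallyEq (Filter.Eventually.of_forall fun y => ?_)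
        simp
      rw [h1.deriv]
      rw [← iteratedDeriv_succ]
      cases ℓ with
      | zero => simp; ring
      | succ k =>
          have : (k+1:ℕ) - 1 = k := rfl
          rw [this, ← iteratedDeriv_succ]
          push_cast
          ring

lemma gamma_rec (ℓ : ℕ) {x : ℝ} (hx : 0 < x) :
    iteratedDeriv ℓ Real.Gamma (x+1)
      = x * iteratedDeriv ℓ Real.Gamma x + ℓ * iteratedDeriv (ℓ-1) Real.Gamma x := by
  have h1 : iteratedDeriv ℓ Real.Gamma (x+1)
      = iteratedDeriv ℓ (fun y => Real.Gamma (y+1)) x := by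
    rw [iteratedDeriv_comp_add_const]
  have h2 : (fun y => Real.Gamma (y+1)) =ᶠ[𝓝 x] (fun y => y * Real.Gamma y) := by
    filter_upwards [Ioi_mem_nhds hx] with y hy
    exact Real.Gamma_add_one (ne_of_gt hy)
  rw [h1, (eventuallyEq_iteratedDeriv ℓ h2).eq_of_nhds]
  exact gamma_mul_iter ℓ x hx



variable (κ : ℚ)

def Tc : ℕ → ℕ → ℕ → ℚ
  | 0, ℓ, k => if ℓ = k then 1 else 0
  | (m+1), ℓ, k => (κ + m) * Tc m ℓ k + ℓ * Tc m (ℓ-1) k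

lemma Tz : ∀ m ℓ k, ℓ < k → Tc κ m ℓ k = 0 := by
  intro m
  induction m with
  | zero => intro ℓ k h; simp [Tc, Nat.ne_of_lt h]
  | succ m ih =>
      intro ℓ k h
      rw [Tc, ih ℓ k h]
      cases ℓ with
      | zero => simp
      | succ ℓ' =>
          rw [show ℓ' + 1 - 1 = ℓ' from rfl, ih ℓ' k (by omega)]
          push_cast; ring

noncomputable def Pp : ℕ → ℚ[X] := fun m => ∏ i ∈ Finset.range m, (X + C (κ + i))

lemma Pp_succ (m : ℕ) : Pp κ (m+1) = Pp κ m * X + C (κ + m) * Pp κ m := by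
  rw [Pp, Finset.prod_range_succ, ← Pp]; ring

lemma facQ_ne (k : ℕ) : ((k.factorial : ℚ)) ≠ 0 := by
  exact_mod_cast k.factorial_ne_zero

lemma Tclosed : ∀ m nn k, k ≤ nn →
    Tc κ m nn k = (Pp κ m).coeff (nn - k) * ((nn.factorial : ℚ) / (k.factorial : ℚ)) := by
  intro m
  induction m with
  | zero =>
      intro nn k hk
      simp only [Tc, Pp, Finset.range_zero, Finset.prod_empty, coeff_one]
      rcases eq_or_lt_of_le hk with h | h
      · subst h
        rw [if_pos rfl, if_pos (by omega), div_self (facQ_ne k)]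
        ring
      · rw [if_neg (by omega : ¬ nn = k), if_neg (by omega : ¬ nn - k = 0)]
        ring
  | succ m ih =>
      intro nn k hk
      rw [Tc]
      rcases eq_or_lt_of_le hk with h | h
      · -- k = nn
        subst h
        have h2 : (k:ℚ) * Tc κ m (k-1) k = 0 := by
          cases k with
          | zero => simp
          | succ k' =>
              rw [show k' + 1 - 1 = k' from rfl, Tz κ m k' (k'+1) (by omega)]
              simp
        have hco0 : (Pp κ (m+1)).coeff 0 = (κ + m) * (Pp κ m).coeff 0 := by
          rw [Pp_succ, coeff_add, coeff_mul_X_zero, coeff_C_mul, zero_add]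
        rw [ih k k le_rfl, h2, Nat.sub_self, hco0]
        ring
      · -- k < nn
        have h1 : nn - 1 - k = nn - k - 1 := by omega
        rw [ih nn k hk, ih (nn-1) k (by omega), h1]
        have hco : (Pp κ (m+1)).coeff (nn - k)
            = (Pp κ m).coeff (nn - k - 1) + (κ + m) * (Pp κ m).coeff (nn - k) := by
          rw [Pp_succ, coeff_add, coeff_C_mul]
          congr 1
          obtain ⟨j, hj⟩ : ∃ j, nn - k = j + 1 := ⟨nn - k - 1, by omega⟩
          rw [hj, coeff_mul_X]
          simp
        rw [hco]
        have h3 : ((nn.factorial : ℚ)) = (nn : ℚ) * ((nn-1).factorial : ℚ) := by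
          conv_lhs => rw [show nn = nn - 1 + 1 by omega]
          rw [Nat.factorial_succ]
          push_cast [show nn - 1 + 1 = nn by omega]
          ring
        rw [h3]
        ring

lemma Texp (h0 : 0 < κ) : ∀ (m ℓ : ℕ), iteratedDeriv ℓ Real.Gamma ((κ:ℝ) + (m:ℝ))
    = ∑ k ∈ Finset.range (ℓ+1), ((Tc κ m ℓ k : ℚ) : ℝ) * iteratedDeriv k Real.Gamma (κ:ℝ) := by
  intro m
  induction m with
  | zero =>
      intro ℓ
      rw [Finset.sum_eq_single ℓ]
      · simp [Tc]
      · intro k hk hne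
        simp [Tc, Ne.symm hne]
      · intro h; exact absurd (Finset.self_mem_range_succ ℓ) h
  | succ m ih =>
      intro ℓ
      have hx : (0:ℝ) < (κ:ℝ) + m := by positivity
      have harg : (κ:ℝ) + ((m+1 : ℕ) : ℝ) = ((κ:ℝ) + m) + 1 := by push_cast; ring
      rw [harg, gamma_rec ℓ hx, ih ℓ]
      have hsec : (((κ:ℝ) + m)) * ∑ k ∈ Finset.range (ℓ+1), ((Tc κ m ℓ k : ℚ) : ℝ) * iteratedDeriv k Real.Gamma (κ:ℝ)
          = ∑ k ∈ Finset.range (ℓ+1), ((((κ + m) * Tc κ m ℓ k : ℚ)) : ℝ) * iteratedDeriv k Real.Gamma (κ:ℝ) := by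
        rw [Finset.mul_sum]
        apply Finset.sum_congr rfl
        intro k _
        push_cast
        ring
      rw [hsec]
      have hthird : (ℓ:ℝ) * iteratedDeriv (ℓ-1) Real.Gamma ((κ:ℝ) + m)
          = ∑ k ∈ Finset.range (ℓ+1), ((((ℓ:ℚ) * Tc κ m (ℓ-1) k : ℚ)) : ℝ) * iteratedDeriv k Real.Gamma (κ:ℝ) := by
        cases ℓ with
        | zero => simp
        | succ ℓ' =>
            have hz : Tc κ m ℓ' (ℓ'+1) = 0 := Tz κ m ℓ' (ℓ'+1) (by omega)
            simp only [Nat.add_sub_cancel]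
            rw [ih ℓ', Finset.mul_sum]
            conv_rhs => rw [Finset.sum_range_succ]
            rw [hz]
            simp only [Rat.cast_mul, Rat.cast_zero, mul_zero, zero_mul, add_zero]
            apply Finset.sum_congr rfl
            intro k _
            push_cast
            ring
      rw [hthird, ← Finset.sum_add_distrib]
      apply Finset.sum_congr rfl
      intro k _
      rw [Tc]
      push_cast
      ring

section Det
variable (n : ℕ) (a : ℕ → ℚ)

noncomputable def Pd : ℕ → ℚ[X] := fun m => ∏ i ∈ Finset.range m, (X + C (a i))

noncomputable def Mt (m e : Fin (n+1) → ℕ) : Matrix (Fin (n+1)) (Fin (n+1)) ℚ :=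
  Matrix.of fun j k => (Pd a (m j) * X ^ (e j)).coeff (k : ℕ)

lemma Pd_succ (m : ℕ) (e : ℕ) :
    Pd a (m+1) * X ^ e = a m • (Pd a m * X ^ e) + Pd a m * X ^ (e+1) := by
  rw [Pd, Finset.prod_range_succ, ← Pd, smul_eq_C_mul]
  ring

/-- strict monotone `Fin (n+1) → ℕ` functions grow at least like the index -/
lemma sm_lb {f : Fin (n+1) → ℕ} (hf : StrictMono f) : ∀ j : Fin (n+1), (j : ℕ) ≤ f j := by
  have key : ∀ (v : ℕ) (j : Fin (n+1)), (j : ℕ) = v → v ≤ f j := by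
    intro v
    induction v with
    | zero => intro j _; exact Nat.zero_le _
    | succ v ih =>
        intro j hj
        have hv : v < n + 1 := by omega
        have h1 : v ≤ f ⟨v, hv⟩ := ih ⟨v, hv⟩ rfl
        have h2 : f ⟨v, hv⟩ < f j := hf (by simp [Fin.lt_def, hj])
        omega
  intro j; exact key (j : ℕ) j rfl

lemma detlem (m e : Fin (n+1) → ℕ) (p : Fin (n+1)) (hp : 1 ≤ m p) :
    (Mt n a m e).det
      = a (m p - 1) * (Mt n a (Function.update m p (m p - 1)) e).det
        + (Mt n a (Function.update m p (m p - 1)) (Function.update e p (e p + 1))).det := by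
  set m₁ := Function.update m p (m p - 1) with hm₁
  set e₂ := Function.update e p (e p + 1) with he₂
  have hrow : ∀ k : Fin (n+1), (Pd a (m p) * X ^ (e p)).coeff (k:ℕ)
      = a (m p - 1) * (Pd a (m p - 1) * X ^ (e p)).coeff (k:ℕ)
        + (Pd a (m p - 1) * X ^ (e p + 1)).coeff (k:ℕ) := by
    intro k
    conv_lhs => rw [show m p = (m p - 1) + 1 by omega]
    rw [Pd_succ, coeff_add, coeff_smul]
    simp [smul_eq_mul]
  have hMe : Mt n a m e = Matrix.updateRow (Mt n a m₁ e) p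
      (fun k => a (m p - 1) * (Pd a (m p - 1) * X ^ (e p)).coeff (k:ℕ)
        + (Pd a (m p - 1) * X ^ (e p + 1)).coeff (k:ℕ)) := by
    funext i k
    by_cases hip : i = p
    · subst hip
      rw [Matrix.updateRow_self]
      exact hrow k
    · rw [Matrix.updateRow_ne hip]
      simp only [Mt, Matrix.of_apply, hm₁, Function.update_of_ne hip]
  rw [hMe]
  set r₁ : Fin (n+1) → ℚ := fun k => (Pd a (m p - 1) * X ^ (e p)).coeff (k:ℕ) with hr₁
  set r₂ : Fin (n+1) → ℚ := fun k => (Pd a (m p - 1) * X ^ (e p + 1)).coeff (k:ℕ) with hr₂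
  have hsplit : (fun k : Fin (n+1) => a (m p - 1) * (Pd a (m p - 1) * X ^ (e p)).coeff (k:ℕ)
        + (Pd a (m p - 1) * X ^ (e p + 1)).coeff (k:ℕ))
      = (a (m p - 1) • r₁ + r₂ : Fin (n+1) → ℚ) := by
    funext k; simp [hr₁, hr₂, smul_eq_mul]
  rw [hsplit, Matrix.det_updateRow_add, Matrix.det_updateRow_smul]
  congr 1
  · congr 1
    have : r₁ = (Mt n a m₁ e) p := by
      funext k
      simp only [hr₁, Mt, Matrix.of_apply, hm₁, Function.update_self]
    rw [this, Matrix.updateRow_eq_self]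
  · have : Matrix.updateRow (Mt n a m₁ e) p r₂ = Mt n a m₁ e₂ := by
      funext i k
      by_cases hip : i = p
      · subst hip
        rw [Matrix.updateRow_self]
        simp only [hr₂, Mt, Matrix.of_apply, hm₁, he₂, Function.update_self]
      · rw [Matrix.updateRow_ne hip]
        simp only [Mt, Matrix.of_apply, hm₁, he₂, Function.update_of_ne hip]
    rw [this]

lemma allzero_case (m e : Fin (n+1) → ℕ) (hm0 : ∀ j, m j = 0) (hme : Monotone e) :
    (Mt n a m e).det = 0 ∨ ((∀ j, e j = (j:ℕ)) ∧ (Mt n a m e).det = 1) := by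
  have hentry : ∀ j k, Mt n a m e j k = if (k : ℕ) = e j then 1 else 0 := by
    intro j k
    simp only [Mt, Matrix.of_apply, hm0, Pd, Finset.range_zero, Finset.prod_empty, one_mul,
      coeff_X_pow]
  by_cases hinj : Function.Injective e
  · have hsm : StrictMono e := hme.strictMono_of_injective hinj
    by_cases hbig : ∃ j, n < e j
    · left
      obtain ⟨j, hj⟩ := hbig
      apply Matrix.det_eq_zero_of_row_eq_zero j
      intro k
      rw [hentry]
      exact if_neg (by omega)
    · push_neg at hbig
      have heq : ∀ j, e j = (j : ℕ) := by
        -- e j ≥ j and e j ≤ j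
        have hlb := sm_lb n hsm
        -- upper: e j ≤ j
        intro j
        have h1 : (j:ℕ) ≤ e j := hlb j
        by_contra hne
        have hgt : (j:ℕ) < e j := by omega
        -- then e (last) ≥ e j + (n - j) > n
        have hstep : ∀ i i' : Fin (n+1), i ≤ i' → e i + ((i':ℕ) - (i:ℕ)) ≤ e i' := by
          intro i i' hii
          have key : ∀ (d : ℕ) (i i' : Fin (n+1)), (i:ℕ) + d = (i':ℕ) → e i + d ≤ e i' := by
            intro d
            induction d with
            | zero => intro i i' h; have : i = i' := Fin.ext (by omega); subst this; omega
            | succ d ihd =>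
                intro i i' h
                have hlt : (i':ℕ) - 1 < n + 1 := by omega
                have h1 := ihd i ⟨(i':ℕ) - 1, hlt⟩ (by simp; omega)
                have h2 : e ⟨(i':ℕ) - 1, hlt⟩ < e i' := hsm (show (i':ℕ) - 1 < (i':ℕ) by omega)
                omega
          exact key _ i i' (by omega) 
        have hlast := hstep j (Fin.last n) (Fin.le_last j)
        have := hbig (Fin.last n)
        simp [Fin.last] at hlast this
        omega
      right
      refine ⟨heq, ?_⟩
      have hone : Mt n a m e = 1 := by
        funext j k
        rw [hentry, Matrix.one_apply]
        by_cases h : j = k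
        · subst h; simp [heq]
        · rw [if_neg h, if_neg (by
            intro hc
            apply h
            apply Fin.ext
            rw [heq] at hc
            omega)]
      rw [hone, Matrix.det_one]
  · left
    rw [Function.not_injective_iff] at hinj
    obtain ⟨j, j', hjj', hne⟩ := hinj
    apply Matrix.det_zero_of_row_eq hne
    funext k
    rw [hentry, hentry, hjj']


lemma exists_pivot (m e : Fin (n+1) → ℕ) (hme : Monotone e)
    (hs : Monotone (fun j => e j + m j)) (hT : ∃ j, 1 ≤ m j) :
    (∃ j j' : Fin (n+1), j ≠ j' ∧ m j = m j' ∧ e j = e j') ∨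
    (∃ p : Fin (n+1), 1 ≤ m p ∧ (∀ j, j < p → e j + m j < e p + m p)
      ∧ (∀ j, p < j → e p < e j)) := by
  by_cases hdup : ∃ j j' : Fin (n+1), j ≠ j' ∧ m j = m j' ∧ e j = e j'
  · exact Or.inl hdup
  right
  push_neg at hdup
  -- the largest index with m ≥ 1
  set TT : Finset (Fin (n+1)) := Finset.univ.filter (fun j => 1 ≤ m j) with hTT
  have hTTne : TT.Nonempty := by
    obtain ⟨j, hj⟩ := hT
    exact ⟨j, by simp [hTT, hj]⟩
  set j0 : Fin (n+1) := TT.max' hTTne with hj0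
  have hj0m : 1 ≤ m j0 := by
    have := TT.max'_mem hTTne
    simpa [hTT] using this
  have hgood0 : ∀ j, j0 < j → e j0 < e j := by
    intro j hj
    have hnot : j ∉ TT := by
      intro hmem
      exact absurd (TT.le_max' j hmem) (not_le.mpr hj)
    have hmj : m j = 0 := by
      by_contra hc
      exact hnot (by simp [hTT]; omega)
    have := hs (le_of_lt hj)
    simp only at this
    omega
  -- descending search
  have aux : ∀ (v : ℕ) (p : Fin (n+1)), (p : ℕ) ≤ v → 1 ≤ m p →
      (∀ j, p < j → e p < e j) →
      ∃ q : Fin (n+1), 1 ≤ m q ∧ (∀ j, j < q → e j + m j < e q + m q)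
        ∧ (∀ j, q < j → e q < e j) := by
    intro v
    induction v with
    | zero =>
        intro p hp h1 h2
        refine ⟨p, h1, ?_, h2⟩
        intro j hj
        exact absurd hj (by
          have : (j:ℕ) < (p:ℕ) := hj
          omega)
    | succ v ih =>
        intro p hp h1 h2
        by_cases hall : ∀ j, j < p → e j + m j < e p + m p
        · exact ⟨p, h1, hall, h2⟩
        · push_neg at hall
          obtain ⟨j, hjp, hjs⟩ := hall
          have hppos : 1 ≤ (p:ℕ) := by
            have : (j:ℕ) < (p:ℕ) := hjp
            omega
          set q : Fin (n+1) := ⟨(p:ℕ) - 1, by omega⟩ with hq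
          have hqp : q < p := by show (p:ℕ) - 1 < (p:ℕ); omega
          have hsq : e q + m q = e p + m p := by
            have h3 := hs (le_of_lt hjp)
            have h4 := hs (show j ≤ q by simp [Fin.le_def, hq]; omega)
            have h5 := hs (le_of_lt hqp)
            simp only at h3 h4 h5
            omega
          have heq : e q < e p := by
            rcases lt_or_eq_of_le (hme (le_of_lt hqp)) with h | h
            · exact h
            · exfalso
              exact hdup q p (ne_of_lt hqp) (by omega) h
          have hmq : 1 ≤ m q := by omega
          have hgoodq : ∀ j', q < j' → e q < e j' := by
            intro j' hj'
            have hj'v : (p:ℕ) - 1 < (j':ℕ) := by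
              have := hj'
              simpa [hq, Fin.lt_def] using this
            rcases lt_or_ge j' p with h | h
            · exfalso
              have : (j':ℕ) < (p:ℕ) := h
              omega
            · rcases eq_or_lt_of_le h with h3 | h3
              · subst h3; exact heq
              · exact lt_trans heq (h2 j' h3)
          exact ih q (by simp [hq]; omega) hmq hgoodq
  exact aux (j0 : ℕ) j0 le_rfl hj0m hgood0


lemma mt_one (m e : Fin (n+1) → ℕ) (hm0 : ∀ j, m j = 0) (hej : ∀ j, e j = (j:ℕ)) :
    (Mt n a m e).det = 1 := by
  have hone : Mt n a m e = 1 := by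
    funext j k
    simp only [Mt, Matrix.of_apply, hm0, Pd, Finset.range_zero, Finset.prod_empty, one_mul,
      coeff_X_pow, Matrix.one_apply, hej]
    by_cases h : j = k
    · subst h; simp
    · rw [if_neg (by intro hc; exact h (Fin.ext (by omega)).symm), if_neg h]
  rw [hone, Matrix.det_one]

lemma sum_update_lt (m : Fin (n+1) → ℕ) (p : Fin (n+1)) (hp : 1 ≤ m p) :
    ∑ j, Function.update m p (m p - 1) j + 1 = ∑ j, m j := by
  rw [Finset.sum_update_of_mem (Finset.mem_univ p)]
  conv_rhs => rw [Finset.sum_eq_sum_sdiff_singleton_add (Finset.mem_univ p) m]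
  omega

lemma detNonneg (ha : ∀ i, 0 < a i) : ∀ (N : ℕ) (m e : Fin (n+1) → ℕ), (∑ j, m j) = N →
    Monotone e → Monotone (fun j => e j + m j) → 0 ≤ (Mt n a m e).det := by
  intro N
  induction N using Nat.strong_induction_on with
  | _ N ih =>
  intro m e hsum hme hs
  by_cases hT : ∃ j, 1 ≤ m j
  · rcases exists_pivot n m e hme hs hT with ⟨j, j', hne, hmm, hee⟩ | ⟨p, hp1, hp2, hp3⟩
    · apply le_of_eq; symm
      apply Matrix.det_zero_of_row_eq hne
      funext k
      simp only [Mt, Matrix.of_apply, hmm, hee]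
    · rw [detlem n a m e p hp1]
      set m₁ := Function.update m p (m p - 1) with hm₁
      set e₂ := Function.update e p (e p + 1) with he₂
      have hm₁app : ∀ x, m₁ x = if x = p then m p - 1 else m x := by
        intro x; rw [hm₁, Function.update_apply]
      have he₂app : ∀ x, e₂ x = if x = p then e p + 1 else e x := by
        intro x; rw [he₂, Function.update_apply]
      have hNpos : 1 ≤ N := by
        obtain ⟨j, hj⟩ := hT
        have h1 : m j ≤ ∑ j, m j :=
          Finset.single_le_sum (fun i _ => Nat.zero_le (m i)) (Finset.mem_univ j)
        omega
      have hsum1 : ∑ j, m₁ j = N - 1 := by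
        have h := sum_update_lt n m p hp1
        rw [hm₁]
        omega
      have hs₁ : Monotone (fun j => e j + m₁ j) := by
        intro i j hij
        have h1 : e i + m i ≤ e j + m j := hs hij
        have h2 : e i ≤ e j := hme hij
        show e i + m₁ i ≤ e j + m₁ j
        rw [hm₁app i, hm₁app j]
        split_ifs with h3 h4 h4
        · omega
        · have h5 : m i = m p := by rw [h3]
          omega
        · have h6 : i < p := lt_of_le_of_ne (le_trans hij (le_of_eq h4)) h3
          have h7 := hp2 i h6
          have h8 : e j = e p := by rw [h4]
          have h9 : m j = m p := by rw [h4]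
          omega
        · omega
      have he₂m : Monotone e₂ := by
        intro i j hij
        have h2 : e i ≤ e j := hme hij
        show e₂ i ≤ e₂ j
        rw [he₂app i, he₂app j]
        split_ifs with h3 h4 h4
        · omega
        · have h5 : p < j := lt_of_le_of_ne (le_of_eq_of_le h3.symm hij)
            (fun hc => h4 hc.symm)
          have h6 := hp3 j h5
          have h7 : e i = e p := by rw [h3]
          omega
        · have h8 : e j = e p := by rw [h4]
          omega
        · omega
      have hs₂ : Monotone (fun j => e₂ j + m₁ j) := by
        have hfun : (fun j => e₂ j + m₁ j) = fun j => e j + m j := by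
          funext j
          rw [hm₁app j, he₂app j]
          split_ifs with h3
          · rw [h3]; omega
          · rfl
        rw [hfun]
        exact hs
      have hD1 : 0 ≤ (Mt n a m₁ e).det := ih (N-1) (by omega) m₁ e hsum1 hme hs₁
      have hD2 : 0 ≤ (Mt n a m₁ e₂).det := ih (N-1) (by omega) m₁ e₂ hsum1 he₂m hs₂
      have hap : 0 < a (m p - 1) := ha _
      positivity
  · push_neg at hT
    have hm0 : ∀ j, m j = 0 := fun j => by have := hT j; omega
    rcases allzero_case n a m e hm0 hme with h | ⟨_, h⟩ <;> rw [h] <;> norm_num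
lemma detPos (ha : ∀ i, 0 < a i) : ∀ (N : ℕ) (m e : Fin (n+1) → ℕ), (∑ j, m j) = N →
    Monotone e → Monotone m →
    (∀ j j' : Fin (n+1), j ≠ j' → m j = m j' → e j ≠ e j') →
    (∀ j : Fin (n+1), e j ≤ (j:ℕ)) → (∀ j : Fin (n+1), (j:ℕ) ≤ e j + m j) → 0 < (Mt n a m e).det := by
  intro N
  induction N using Nat.strong_induction_on with
  | _ N ih =>
  intro m e hsum hme hmm hdist heb hsb
  have hs : Monotone (fun j => e j + m j) := by
    intro i j hij
    have := hme hij
    have := hmm hij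
    show e i + m i ≤ e j + m j
    omega
  by_cases hT : ∃ j, 1 ≤ m j
  · -- pivot: first index attaining the maximal value of m
    have hmxall : ∀ j, m j ≤ m (Fin.last n) := fun j => hmm (Fin.le_last j)
    have hmx1 : 1 ≤ m (Fin.last n) := by
      obtain ⟨j, hj⟩ := hT
      exact le_trans hj (hmxall j)
    set BB : Finset (Fin (n+1)) := Finset.univ.filter (fun j => m j = m (Fin.last n)) with hBB
    have hBBne : BB.Nonempty := ⟨Fin.last n, by simp [hBB]⟩
    set p : Fin (n+1) := BB.min' hBBne with hpdef
    have hpmx : m p = m (Fin.last n) := by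
      have := BB.min'_mem hBBne
      simpa [hBB] using this
    have hp1 : 1 ≤ m p := by omega
    have hpmin : ∀ j, j < p → m j < m p := by
      intro j hj
      have hnot : j ∉ BB := by
        intro hmem
        exact absurd (BB.min'_le j hmem) (not_le.mpr hj)
      have : m j ≠ m (Fin.last n) := by
        intro hc; exact hnot (by simp [hBB, hc])
      have := hmxall j
      omega
    have hptail : ∀ j, p < j → m j = m p := by
      intro j hj
      have h1 : m p ≤ m j := hmm (le_of_lt hj)
      have h2 := hmxall j
      omega
    have htaile : ∀ j, p < j → e p < e j := by
      intro j hj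
      have h1 := hdist p j (ne_of_lt hj) (hptail j hj).symm
      have h2 := hme (le_of_lt hj)
      omega
    rw [detlem n a m e p hp1]
    set m₁ := Function.update m p (m p - 1) with hm₁
    set e₂ := Function.update e p (e p + 1) with he₂
    have hm₁app : ∀ x, m₁ x = if x = p then m p - 1 else m x := by
      intro x; rw [hm₁, Function.update_apply]
    have he₂app : ∀ x, e₂ x = if x = p then e p + 1 else e x := by
      intro x; rw [he₂, Function.update_apply]
    have hNpos : 1 ≤ N := by
      obtain ⟨j, hj⟩ := hT
      have h1 : m j ≤ ∑ j, m j :=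
        Finset.single_le_sum (fun i _ => Nat.zero_le (m i)) (Finset.mem_univ j)
      omega
    have hsum1 : ∑ j, m₁ j = N - 1 := by
      have h := sum_update_lt n m p hp1
      rw [hm₁]
      omega
    -- weak invariants for both children
    have hs₁ : Monotone (fun j => e j + m₁ j) := by
      intro i j hij
      have h1 : e i + m i ≤ e j + m j := hs hij
      have h2 : e i ≤ e j := hme hij
      show e i + m₁ i ≤ e j + m₁ j
      rw [hm₁app i, hm₁app j]
      split_ifs with h3 h4 h4
      · omega
      · have h5 : m i = m p := by rw [h3]
        omega
      · have h6 : i < p := lt_of_le_of_ne (le_trans hij (le_of_eq h4)) h3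
        have h7 := hpmin i h6
        have h8 : e j = e p := by rw [h4]
        have h9 : m j = m p := by rw [h4]
        omega
      · omega
    have he₂m : Monotone e₂ := by
      intro i j hij
      have h2 : e i ≤ e j := hme hij
      show e₂ i ≤ e₂ j
      rw [he₂app i, he₂app j]
      split_ifs with h3 h4 h4
      · omega
      · have h5 : p < j := lt_of_le_of_ne (le_of_eq_of_le h3.symm hij)
          (fun hc => h4 hc.symm)
        have h6 := htaile j h5
        have h7 : e i = e p := by rw [h3]
        omega
      · have h8 : e j = e p := by rw [h4]
        omega
      · omega
    have hs₂ : Monotone (fun j => e₂ j + m₁ j) := by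
      have hfun : (fun j => e₂ j + m₁ j) = fun j => e j + m j := by
        funext j
        rw [hm₁app j, he₂app j]
        split_ifs with h3
        · rw [h3]; omega
        · rfl
      rw [hfun]
      exact hs
    have hm₁m : Monotone m₁ := by
      intro i j hij
      have h2 : m i ≤ m j := hmm hij
      show m₁ i ≤ m₁ j
      rw [hm₁app i, hm₁app j]
      split_ifs with h3 h4 h4
      · omega
      · have h5 : p < j := lt_of_le_of_ne (le_of_eq_of_le h3.symm hij)
          (fun hc => h4 hc.symm)
        have h6 := hptail j h5
        omega
      · have h6 : i < p := lt_of_le_of_ne (le_trans hij (le_of_eq h4)) h3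
        have h7 := hpmin i h6
        omega
      · omega
    have hap : 0 < a (m p - 1) := ha _
    have hD1w : 0 ≤ (Mt n a m₁ e).det := detNonneg n a ha (N-1) m₁ e hsum1 hme hs₁
    have hD2w : 0 ≤ (Mt n a m₁ e₂).det := detNonneg n a ha (N-1) m₁ e₂ hsum1 he₂m hs₂
    rcases eq_or_lt_of_le (heb p) with hep | hep
    · -- e p = p : strong child is child1
      have hdist1 : ∀ j j' : Fin (n+1), j ≠ j' → m₁ j = m₁ j' → e j ≠ e j' := by
        intro j j' hne hmeq
        by_cases h3 : j = p
        · have h4 : ¬ j' = p := fun hc => hne (h3.trans hc.symm)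
          rw [hm₁app, hm₁app, if_pos h3, if_neg h4] at hmeq
          have h8 : e j = e p := by rw [h3]
          rcases lt_or_gt_of_ne h4 with h5 | h5
          · have h6 : e j' ≤ (j' : ℕ) := heb j'
            have h7 : (j' : ℕ) < (p : ℕ) := h5
            omega
          · have h6 := htaile j' h5
            omega
        · by_cases h4 : j' = p
          · rw [hm₁app, hm₁app, if_neg h3, if_pos h4] at hmeq
            have h8 : e j' = e p := by rw [h4]
            rcases lt_or_gt_of_ne h3 with h5 | h5
            · have h6 : e j ≤ (j : ℕ) := heb j
              have h7 : (j : ℕ) < (p : ℕ) := h5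
              omega
            · have h6 := htaile j h5
              omega
          · rw [hm₁app, hm₁app, if_neg h3, if_neg h4] at hmeq
            exact hdist j j' hne hmeq
      have hsb1 : ∀ j : Fin (n+1), (j:ℕ) ≤ e j + m₁ j := by
        intro j
        rw [hm₁app j]
        split_ifs with h3
        · have h8 : e j = e p := by rw [h3]
          have h9 : (j:ℕ) = (p:ℕ) := by rw [h3]
          omega
        · exact hsb j
      have hD1 : 0 < (Mt n a m₁ e).det :=
        ih (N-1) (by omega) m₁ e hsum1 hme hm₁m hdist1 heb hsb1
      exact add_pos_of_pos_of_nonneg (mul_pos hap hD1) hD2w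
    · -- e p < p : strong child is child2
      have hdist2 : ∀ j j' : Fin (n+1), j ≠ j' → m₁ j = m₁ j' → e₂ j ≠ e₂ j' := by
        intro j j' hne hmeq
        by_cases h3 : j = p
        · have h4 : ¬ j' = p := fun hc => hne (h3.trans hc.symm)
          rw [hm₁app, hm₁app, if_pos h3, if_neg h4] at hmeq
          rw [he₂app, he₂app, if_pos h3, if_neg h4]
          rcases lt_or_gt_of_ne h4 with h5 | h5
          · have h6 : e j' ≤ e p := hme (le_of_lt h5)
            omega
          · have h6 := hptail j' h5
            omega
        · by_cases h4 : j' = p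
          · rw [hm₁app, hm₁app, if_neg h3, if_pos h4] at hmeq
            rw [he₂app, he₂app, if_neg h3, if_pos h4]
            rcases lt_or_gt_of_ne h3 with h5 | h5
            · have h6 : e j ≤ e p := hme (le_of_lt h5)
              omega
            · have h6 := hptail j h5
              omega
          · rw [hm₁app, hm₁app, if_neg h3, if_neg h4] at hmeq
            rw [he₂app, he₂app, if_neg h3, if_neg h4]
            exact hdist j j' hne hmeq
      have heb2 : ∀ j : Fin (n+1), e₂ j ≤ (j:ℕ) := by
        intro j
        rw [he₂app j]
        split_ifs with h3
        · have h9 : (j:ℕ) = (p:ℕ) := by rw [h3]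
          omega
        · exact heb j
      have hsb2 : ∀ j : Fin (n+1), (j:ℕ) ≤ e₂ j + m₁ j := by
        intro j
        rw [he₂app j, hm₁app j]
        split_ifs with h3
        · have h9 : (j:ℕ) = (p:ℕ) := by rw [h3]
          have := hsb p
          omega
        · exact hsb j
      have hD2 : 0 < (Mt n a m₁ e₂).det :=
        ih (N-1) (by omega) m₁ e₂ hsum1 he₂m hm₁m hdist2 heb2 hsb2
      exact add_pos_of_nonneg_of_pos (mul_nonneg hap.le hD1w) hD2
  · -- all m zero
    push_neg at hT
    have hm0 : ∀ j, m j = 0 := fun j => by have := hT j; omega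
    have hinj : Function.Injective e := by
      intro i j hij
      by_contra hne
      exact hdist i j hne (by rw [hm0, hm0]) hij
    have hsm : StrictMono e := hme.strictMono_of_injective hinj
    have hej : ∀ j, e j = (j:ℕ) := fun j => le_antisymm (heb j) (sm_lb n hsm j)
    rw [mt_one n a m e hm0 hej]
    norm_num
end Det

lemma PpPd (κ : ℚ) (m : ℕ) : Pp κ m = Pd (fun i => κ + i) m := rfl

theorem stmt15 (κ : ℚ) (h0 : 0 < κ) (h1 : κ < 1)
    (hκ : Transcendental ℚ (Real.Gamma (κ : ℝ))) (n : ℕ) (hn : 1 ≤ n) :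
    {m : ℕ | IsAlgebraic ℚ (iteratedDeriv n Real.Gamma ((m : ℝ) + (κ : ℝ)))}.Finite ∧
    {m : ℕ | IsAlgebraic ℚ (iteratedDeriv n Real.Gamma ((m : ℝ) + (κ : ℝ)))}.ncard ≤ n := by
  set S := {m : ℕ | IsAlgebraic ℚ (iteratedDeriv n Real.Gamma ((m : ℝ) + (κ : ℝ)))} with hS
  have key : ∀ T : Finset ℕ, ↑T ⊆ S → T.card ≤ n := by
    intro T hT
    by_contra hcard
    push_neg at hcard
    obtain ⟨T', hT'sub, hT'card⟩ := Finset.exists_subset_card_eq (show n+1 ≤ T.card from hcard)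
    set mv : Fin (n+1) → ℕ := fun j => (T'.orderIsoOfFin hT'card j : ℕ) with hmv
    have hsm : StrictMono mv := by
      intro i j hij
      have := (T'.orderIsoOfFin hT'card).strictMono hij
      exact this
    have hmem : ∀ j, mv j ∈ S := fun j => hT (hT'sub (T'.orderIsoOfFin hT'card j).2)
    set a : ℕ → ℚ := fun i => κ + i with ha
    have hapos : ∀ i, 0 < a i := fun i => by
      rw [ha]
      have : (0:ℚ) ≤ (i:ℚ) := by positivity
      simp only
      linarith
    set A := Mt n a mv (fun _ => 0) with hA
    have hdetA : 0 < A.det := by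
      apply detPos n a hapos (∑ j, mv j) mv (fun _ => 0) rfl monotone_const hsm.monotone
      · intro j j' hne hmeq
        exact absurd (hsm.injective hmeq) hne
      · intro j; exact Nat.zero_le _
      · intro j
        have := sm_lb n hsm j
        omega
    set B : Matrix (Fin (n+1)) (Fin (n+1)) ℚ :=
      Matrix.of (fun j k : Fin (n+1) => Tc κ (mv j) n (k:ℕ)) with hB
    have hrevval : ∀ k : Fin (n+1), ((Fin.rev k : Fin (n+1)) : ℕ) = n - (k:ℕ) := by
      intro k
      have h1 : ((Fin.rev k : Fin (n+1)) : ℕ) = n + 1 - ((k:ℕ) + 1) := rfl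
      omega
    have hBA : B = (A.submatrix id ⇑Fin.revPerm) *
        Matrix.diagonal (fun k : Fin (n+1) => ((n.factorial:ℚ) / (((k:ℕ)).factorial : ℚ))) := by
      funext j k
      rw [Matrix.mul_diagonal]
      have h2 : (A.submatrix id ⇑Fin.revPerm) j k = A j (Fin.rev k) := rfl
      have h3 : A j (Fin.rev k) = (Pd a (mv j)).coeff (n - (k:ℕ)) := by
        rw [hA]
        show (Pd a (mv j) * X ^ (0:ℕ)).coeff ((Fin.rev k : Fin (n+1)) : ℕ)
          = (Pd a (mv j)).coeff (n - (k:ℕ))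
        rw [pow_zero, mul_one, hrevval k]
      have h4 : B j k = (Pp κ (mv j)).coeff (n - (k:ℕ)) * ((n.factorial:ℚ) / (((k:ℕ)).factorial : ℚ)) := by
        rw [hB]
        show Tc κ (mv j) n (k:ℕ) = _
        exact Tclosed κ (mv j) n (k:ℕ) (by omega)
      rw [h4, h2, h3, PpPd]
    have hdetB : B.det ≠ 0 := by
      rw [hBA, Matrix.det_mul, Matrix.det_diagonal, Matrix.det_permute']
      apply mul_ne_zero
      apply mul_ne_zero
      · exact Int.cast_ne_zero.mpr (Units.ne_zero _)
      · exact ne_of_gt hdetA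
      · apply Finset.prod_ne_zero_iff.mpr
        intro k _
        apply div_ne_zero (facQ_ne n) (facQ_ne _)
    have hBunit : IsUnit B.det := isUnit_iff_ne_zero.mpr hdetB
    have hinv : B⁻¹ * B = 1 := Matrix.nonsing_inv_mul B hBunit
    set c : Fin (n+1) → ℚ := fun j => B⁻¹ 0 j with hc
    have hck : ∀ k : Fin (n+1), (∑ j, c j * B j k) = if (0 : Fin (n+1)) = k then 1 else 0 := by
      intro k
      have h5 : (B⁻¹ * B) 0 k = ∑ j, B⁻¹ 0 j * B j k := Matrix.mul_apply
      rw [hinv, Matrix.one_apply] at h5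
      exact h5.symm
    have hGam : Real.Gamma (κ:ℝ) = ∑ j, ((c j : ℚ) : ℝ) * iteratedDeriv n Real.Gamma ((κ:ℝ) + (mv j : ℝ)) := by
      have h1 : ∀ j : Fin (n+1), iteratedDeriv n Real.Gamma ((κ:ℝ) + (mv j:ℝ))
          = ∑ k : Fin (n+1), ((Tc κ (mv j) n (k:ℕ) : ℚ):ℝ) * iteratedDeriv (k:ℕ) Real.Gamma (κ:ℝ) := by
        intro j
        rw [Texp κ h0 (mv j) n]
        rw [Fin.sum_univ_eq_sum_range (fun k => ((Tc κ (mv j) n k : ℚ):ℝ) * iteratedDeriv k Real.Gamma (κ:ℝ)) (n+1)]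
      calc Real.Gamma (κ:ℝ)
          = ∑ k : Fin (n+1), ((if (0 : Fin (n+1)) = k then (1:ℚ) else 0 : ℚ):ℝ)
              * iteratedDeriv (k:ℕ) Real.Gamma (κ:ℝ) := by
            refine ((Finset.sum_eq_single (0 : Fin (n+1)) ?_ ?_).trans ?_).symm
            · intro k _ hk
              rw [if_neg (fun hc => hk hc.symm)]
              norm_num
            · intro h; exact absurd (Finset.mem_univ _) h
            · norm_num [iteratedDeriv_zero]
        _ = ∑ k : Fin (n+1), ((∑ j, c j * B j k : ℚ):ℝ)
              * iteratedDeriv (k:ℕ) Real.Gamma (κ:ℝ) := by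
            apply Finset.sum_congr rfl
            intro k _
            rw [hck k]
        _ = ∑ k : Fin (n+1), ∑ j : Fin (n+1), ((c j : ℚ):ℝ) * (((Tc κ (mv j) n (k:ℕ) : ℚ)):ℝ)
              * iteratedDeriv (k:ℕ) Real.Gamma (κ:ℝ) := by
            apply Finset.sum_congr rfl
            intro k _
            rw [← Finset.sum_mul]
            congr 1
            push_cast
            apply Finset.sum_congr rfl
            intro j _
            rfl
        _ = ∑ j : Fin (n+1), ((c j : ℚ):ℝ) * ∑ k : Fin (n+1), (((Tc κ (mv j) n (k:ℕ) : ℚ)):ℝ)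
              * iteratedDeriv (k:ℕ) Real.Gamma (κ:ℝ) := by
            rw [Finset.sum_comm]
            apply Finset.sum_congr rfl
            intro j _
            rw [Finset.mul_sum]
            apply Finset.sum_congr rfl
            intro k _
            ring
        _ = ∑ j, ((c j : ℚ) : ℝ) * iteratedDeriv n Real.Gamma ((κ:ℝ) + (mv j : ℝ)) := by
            apply Finset.sum_congr rfl
            intro j _
            rw [h1 j]
    have halg : IsAlgebraic ℚ (Real.Gamma (κ:ℝ)) := by
      rw [isAlgebraic_iff_isIntegral, hGam]
      apply Finset.sum_induction _ _ (fun x y hx hy => IsIntegral.add hx hy) isIntegral_zero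
      intro j _
      apply IsIntegral.mul
      · have h6 : ((c j : ℚ) : ℝ) = algebraMap ℚ ℝ (c j) := (eq_ratCast (algebraMap ℚ ℝ) (c j)).symm
        rw [h6]
        exact isAlgebraic_iff_isIntegral.mp (isAlgebraic_algebraMap (c j))
      · have h7 : IsAlgebraic ℚ (iteratedDeriv n Real.Gamma ((mv j : ℝ) + (κ:ℝ))) := hmem j
        have h8 : ((mv j : ℝ)) + (κ:ℝ) = (κ:ℝ) + (mv j : ℝ) := by ring
        rw [isAlgebraic_iff_isIntegral] at h7
        rw [← h8]
        exact h7
    exact hκ halg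
  have hfin : S.Finite := by
    by_contra hinf
    obtain ⟨T, hTsub, hTcard⟩ := Set.Infinite.exists_subset_card_eq hinf (n+1)
    have := key T hTsub
    omega
  refine ⟨hfin, ?_⟩
  have h2 := key hfin.toFinset (by simp)
  rwa [Set.ncard_eq_toFinset_card S hfin]
end

section
/- Γ(1/6), Γ(2/3), Γ(3/4), and Γ(5/6) are all transcendental numbers, given that Γ(1/4) and Γ(1/3) are transcendental and that each of the pairs {Γ(1/4), π} and {Γ(1/3), π} is algebraically independent over ℚ. -/
open Polynomial in
lemma key_trans {x y : ℝ} (h : AlgebraicIndependent ℚ ![x, y]) (hy : y ≠ 0) (m n : ℕ)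
    (hm : 0 < m) : Transcendental ℚ (x ^ m / y ^ n) := by
  intro hal
  obtain ⟨p, hp, hpe⟩ := hal
  set N := p.natDegree with hN
  set P : MvPolynomial (Fin 2) ℚ :=
    ∑ i ∈ Finset.range (N + 1),
      MvPolynomial.monomial (Finsupp.single 0 (m * i) + Finsupp.single 1 (n * (N - i)))
        (p.coeff i) with hP
  have heval : MvPolynomial.aeval ![x, y] P = y ^ (n * N) * Polynomial.aeval (x ^ m / y ^ n) p := by
    rw [Polynomial.aeval_def, Polynomial.eval₂_eq_sum_range, hP, map_sum, Finset.mul_sum]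
    refine Finset.sum_congr rfl fun i hi => ?_
    rw [Finset.mem_range, Nat.lt_succ_iff] at hi
    rw [MvPolynomial.aeval_monomial,
      Finsupp.prod_add_index (by simp) (by intros; rw [pow_add]),
      Finsupp.prod_single_index (by simp), Finsupp.prod_single_index (by simp)]
    simp only [Matrix.cons_val_zero, Matrix.cons_val_one, Matrix.head_cons]
    have hyy : y ^ (n * (N - i)) * y ^ (n * i) = y ^ (n * N) := by
      rw [← pow_add, ← Nat.mul_add, Nat.sub_add_cancel hi]
    rw [div_pow, ← pow_mul, ← pow_mul, ← hyy]
    have h1 : y ^ (n * i) ≠ 0 := pow_ne_zero _ hy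
    field_simp
  have hP0 : P = 0 := by
    apply h
    rw [map_zero]
    rw [heval, hpe, mul_zero]
  have hcoeff := congrArg (MvPolynomial.coeff (Finsupp.single 0 (m * N))) hP0
  rw [hP, MvPolynomial.coeff_sum, MvPolynomial.coeff_zero] at hcoeff
  rw [Finset.sum_eq_single N] at hcoeff
  · rw [MvPolynomial.coeff_monomial] at hcoeff
    simp only [Nat.sub_self, Nat.mul_zero, Finsupp.single_zero, add_zero, if_pos rfl] at hcoeff
    exact (Polynomial.leadingCoeff_ne_zero.mpr hp) hcoeff
  · intro i hi hiN
    rw [Finset.mem_range, Nat.lt_succ_iff] at hi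
    rw [MvPolynomial.coeff_monomial, if_neg]
    intro hcon
    apply hiN
    have := congrArg (fun f : Fin 2 →₀ ℕ => f 0) hcon
    simp [Finsupp.single_apply] at this
    exact this.resolve_right (by omega)
  · intro hN'
    simp at hN'

lemma ai_swap {x y : ℝ} (h : AlgebraicIndependent ℚ ![x, y]) :
    AlgebraicIndependent ℚ ![y, x] := by
  have h2 := h.comp (Equiv.swap 0 1) (Equiv.swap 0 1).injective
  have : ![y, x] = ![x, y] ∘ (Equiv.swap (0 : Fin 2) 1) := by
    funext i
    fin_cases i <;> simp
  rw [this]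
  exact h2

lemma alg_rat (q : ℚ) : IsAlgebraic ℚ (q : ℝ) := by
  simpa using isAlgebraic_algebraMap (A := ℝ) q

lemma alg_cast (q : ℚ) (x : ℝ) (h : (q : ℝ) = x) : IsAlgebraic ℚ x := h ▸ alg_rat q

lemma alg_mul {a b : ℝ} (ha : IsAlgebraic ℚ a) (hb : IsAlgebraic ℚ b) :
    IsAlgebraic ℚ (a * b) :=
  isAlgebraic_iff_isIntegral.mpr (ha.isIntegral.mul hb.isIntegral)

lemma alg_pow {a : ℝ} (n : ℕ) (ha : IsAlgebraic ℚ a) : IsAlgebraic ℚ (a ^ n) :=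
  isAlgebraic_iff_isIntegral.mpr (ha.isIntegral.pow n)

lemma alg_sqrt (q : ℚ) (hq : (0:ℝ) ≤ (q:ℝ)) : IsAlgebraic ℚ (Real.sqrt q) := by
  refine ⟨Polynomial.X ^ 2 - Polynomial.C q, ?_, ?_⟩
  · intro hc
    have := congrArg (Polynomial.coeff · 2) hc
    simp at this
  · simp [Real.sq_sqrt hq]

lemma alg_sqrt_div_two (q : ℚ) (hq : (0:ℝ) ≤ (q:ℝ)) :
    IsAlgebraic ℚ (Real.sqrt q / 2) := by
  rw [show Real.sqrt q / 2 = Real.sqrt q * ((1/2 : ℚ) : ℝ) by push_cast; ring]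
  exact alg_mul (alg_sqrt q hq) (alg_rat _)

open Real in
theorem stmt17
    (h14 : Transcendental ℚ (Real.Gamma (1 / 4)))
    (h13 : Transcendental ℚ (Real.Gamma (1 / 3)))
    (hind14 : AlgebraicIndependent ℚ ![Real.Gamma (1 / 4), Real.pi])
    (hind13 : AlgebraicIndependent ℚ ![Real.Gamma (1 / 3), Real.pi]) :
    Transcendental ℚ (Real.Gamma (1 / 6)) ∧
    Transcendental ℚ (Real.Gamma (2 / 3)) ∧
    Transcendental ℚ (Real.Gamma (3 / 4)) ∧
    Transcendental ℚ (Real.Gamma (5 / 6)) := by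
  have hG14 : (0:ℝ) < Real.Gamma (1/4) := Real.Gamma_pos_of_pos (by norm_num)
  have hG13 : (0:ℝ) < Real.Gamma (1/3) := Real.Gamma_pos_of_pos (by norm_num)
  have hs2 : (0:ℝ) < Real.sqrt 2 := Real.sqrt_pos.mpr (by norm_num)
  have hs3 : (0:ℝ) < Real.sqrt 3 := Real.sqrt_pos.mpr (by norm_num)
  -- reflection at 1/3
  have hC : Real.Gamma (1/3) * Real.Gamma (2/3) * Real.sqrt 3 = 2 * π := by
    have h := Real.Gamma_mul_Gamma_one_sub (1/3)
    rw [show (1:ℝ) - 1/3 = 2/3 by norm_num, show π * (1/3) = π/3 by ring,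
      Real.sin_pi_div_three] at h
    rw [h]
    field_simp
  -- reflection at 1/4
  have hD : Real.Gamma (1/4) * Real.Gamma (3/4) * Real.sqrt 2 = 2 * π := by
    have h := Real.Gamma_mul_Gamma_one_sub (1/4)
    rw [show (1:ℝ) - 1/4 = 3/4 by norm_num, show π * (1/4) = π/4 by ring,
      Real.sin_pi_div_four] at h
    rw [h]
    field_simp
  -- reflection at 1/6
  have hB : Real.Gamma (1/6) * Real.Gamma (5/6) = 2 * π := by
    have h := Real.Gamma_mul_Gamma_one_sub (1/6)
    rw [show (1:ℝ) - 1/6 = 5/6 by norm_num, show π * (1/6) = π/6 by ring,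
      Real.sin_pi_div_six] at h
    rw [h]
    ring
  -- duplication at 1/6
  have hA : Real.Gamma (1/6) * Real.Gamma (2/3) =
      Real.Gamma (1/3) * (2:ℝ) ^ ((2:ℝ)/3) * Real.sqrt π := by
    have h := Real.Gamma_mul_Gamma_add_half (1/6)
    rw [show (1/6 : ℝ) + 1/2 = 2/3 by norm_num, show (2:ℝ) * (1/6) = 1/3 by norm_num,
      show (1:ℝ) - 1/3 = (2:ℝ)/3 by norm_num] at h
    exact h
  have hmul : Real.Gamma (1/6) * (2 * π) =
      Real.Gamma (1/3) ^ 2 * (2:ℝ) ^ ((2:ℝ)/3) * Real.sqrt 3 * Real.sqrt π := by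
    linear_combination Real.Gamma (1/3) * Real.sqrt 3 * hA - Real.Gamma (1/6) * hC
  have ha6 : ((2:ℝ) ^ ((2:ℝ)/3)) ^ (6:ℕ) = 16 := by
    rw [← Real.rpow_natCast ((2:ℝ) ^ ((2:ℝ)/3)) 6, ← Real.rpow_mul (by norm_num)]
    rw [show (2:ℝ)/3 * ((6:ℕ):ℝ) = ((4:ℕ):ℝ) by push_cast; ring, Real.rpow_natCast]
    norm_num
  have hsp6 : (Real.sqrt π) ^ (6:ℕ) = π ^ 3 := by
    rw [show (6:ℕ) = 2 * 3 from rfl, pow_mul, Real.sq_sqrt Real.pi_nonneg]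
  have hs36 : (Real.sqrt 3) ^ (6:ℕ) = 27 := by
    rw [show (6:ℕ) = 2 * 3 from rfl, pow_mul, Real.sq_sqrt (by norm_num : (0:ℝ) ≤ 3)]
    norm_num
  have h6 := congrArg (· ^ (6:ℕ)) hmul
  simp only [mul_pow] at h6
  rw [ha6, hsp6, hs36] at h6
  have h7 : Real.Gamma (1/6) ^ 6 * 64 * π ^ 3 = Real.Gamma (1/3) ^ 12 * 432 := by
    apply mul_right_cancel₀ (pow_ne_zero 3 Real.pi_ne_zero)
    rw [← pow_mul] at h6
    linear_combination h6
  have hKey : Real.Gamma (1/3) ^ 12 / π ^ 3 = (4/27) * Real.Gamma (1/6) ^ 6 := by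
    rw [div_eq_iff (pow_ne_zero 3 Real.pi_ne_zero)]
    linear_combination (-1/432 : ℝ) * h7
  -- Γ(1/6)
  have t16 : Transcendental ℚ (Real.Gamma (1/6)) := by
    intro hg
    exact key_trans hind13 Real.pi_ne_zero 12 3 (by norm_num)
      (hKey ▸ alg_mul (alg_cast (4/27) _ (by norm_num)) (alg_pow 6 hg))
  -- Γ(2/3)
  have t23 : Transcendental ℚ (Real.Gamma (2/3)) := by
    intro hg
    have hkey := key_trans (ai_swap hind13) (ne_of_gt hG13) 1 1 one_pos
    simp only [pow_one] at hkey
    apply hkey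
    have heq : π / Real.Gamma (1/3) = Real.Gamma (2/3) * (Real.sqrt 3 / 2) := by
      rw [div_eq_iff (ne_of_gt hG13)]
      linear_combination (-1/2 : ℝ) * hC
    rw [heq]
    exact alg_mul hg (alg_sqrt_div_two 3 (by norm_num))
  -- Γ(3/4)
  have t34 : Transcendental ℚ (Real.Gamma (3/4)) := by
    intro hg
    have hkey := key_trans (ai_swap hind14) (ne_of_gt hG14) 1 1 one_pos
    simp only [pow_one] at hkey
    apply hkey
    have heq : π / Real.Gamma (1/4) = Real.Gamma (3/4) * (Real.sqrt 2 / 2) := by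
      rw [div_eq_iff (ne_of_gt hG14)]
      linear_combination (-1/2 : ℝ) * hD
    rw [heq]
    exact alg_mul hg (alg_sqrt_div_two 2 (by norm_num))
  -- Γ(5/6)
  have t56 : Transcendental ℚ (Real.Gamma (5/6)) := by
    intro hg
    have hB6 := congrArg (· ^ (6:ℕ)) hB
    simp only [mul_pow] at hB6
    have hkey := key_trans (ai_swap hind13) (ne_of_gt hG13) 9 12 (by norm_num)
    apply hkey
    have heq : π ^ 9 / Real.Gamma (1/3) ^ 12 = (27/256) * Real.Gamma (5/6) ^ 6 := by
      rw [div_eq_iff (pow_ne_zero 12 (ne_of_gt hG13))]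
      linear_combination (1/4096 : ℝ) * Real.Gamma (5/6) ^ 6 * h7 -
        (1/64 : ℝ) * π ^ 3 * hB6
    rw [heq]
    exact alg_mul (alg_cast (27/256) _ (by norm_num)) (alg_pow 6 hg)
  exact ⟨t16, t23, t34, t56⟩
end

section
/- Let κ ∈ (0,1) be rational with Γ(κ) transcendental. For N ≥ 1 and M ≥ 0, the number of pairs (n, m) ∈ {1,…,N} × {0,…,M} with Γ⁽ⁿ⁾(m+κ) transcendental is at least N(M+1) − Σ_{n=1}^N min{n, M+1}; explicitly, the density of such pairs is at least M/(2N) when M+1 ≤ N, and at least 1 − (N+1)/(2(M+1)) when M+1 > N. -/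
open Finset Set

theorem gammaAnalytic : ∀ n : ℕ, AnalyticOnNhd ℝ (iteratedDeriv n Real.Gamma) (Set.Ioi (0:ℝ)) := by
  have hopen : IsOpen {z : ℂ | 0 < z.re} := isOpen_lt continuous_const Complex.continuous_re
  have hC : AnalyticOnNhd ℂ Complex.Gamma {z : ℂ | 0 < z.re} := by
    intro z hz
    apply DifferentiableOn.analyticAt (s := {z : ℂ | 0 < z.re}) _ (hopen.mem_nhds hz)
    intro w hw
    refine (Complex.differentiableAt_Gamma w ?_).differentiableWithinAt
    intro m hm
    simp only [hm] at hw
    simp at hw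
    have : (0:ℝ) ≤ m := Nat.cast_nonneg m
    linarith [hw]
  have base : AnalyticOnNhd ℝ Real.Gamma (Set.Ioi (0:ℝ)) := by
    intro x hx
    have h1 : AnalyticAt ℂ Complex.Gamma ((Complex.ofRealCLM : ℝ →L[ℝ] ℂ) x) := by
      apply hC
      simpa using hx
    have h2 : AnalyticAt ℝ (fun y : ℝ => Complex.Gamma (Complex.ofRealCLM y)) x :=
      (h1.restrictScalars).comp (Complex.ofRealCLM.analyticAt x)
    have h3 : AnalyticAt ℝ (fun y : ℝ => (Complex.reCLM (Complex.Gamma (Complex.ofRealCLM y)))) x :=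
      (Complex.reCLM.analyticAt _).comp h2
    have : (fun y : ℝ => (Complex.reCLM (Complex.Gamma (Complex.ofRealCLM y)))) = Real.Gamma := by
      funext y
      simp [Complex.Gamma_ofReal]
    rwa [this] at h3
  intro n
  induction n with
  | zero => simpa using base
  | succ n ih =>
    rw [iteratedDeriv_succ]
    exact ih.deriv

theorem gammaDiffAt {n : ℕ} {x : ℝ} (hx : 0 < x) :
    DifferentiableAt ℝ (iteratedDeriv n Real.Gamma) x :=
  (gammaAnalytic n x hx).differentiableAt

theorem mulRec : ∀ (n : ℕ) (x : ℝ), 0 < x →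
    iteratedDeriv n (fun y => y * Real.Gamma y) x
      = x * iteratedDeriv n Real.Gamma x + n * iteratedDeriv (n-1) Real.Gamma x := by
  intro n
  induction n with
  | zero => intro x hx; simp
  | succ n ih =>
    intro x hx
    rw [iteratedDeriv_succ]
    have hev : (iteratedDeriv n fun y => y * Real.Gamma y)
        =ᶠ[nhds x] (fun y => y * iteratedDeriv n Real.Gamma y + n * iteratedDeriv (n-1) Real.Gamma y) := by
      filter_upwards [isOpen_Ioi.mem_nhds hx] with y hy
      exact ih y hy
    rw [hev.deriv_eq]
    have d1 : HasDerivAt (fun y : ℝ => y * iteratedDeriv n Real.Gamma y)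
        (iteratedDeriv n Real.Gamma x + x * iteratedDeriv (n+1) Real.Gamma x) x := by
      have := (hasDerivAt_id x).mul (gammaDiffAt (n := n) hx).hasDerivAt
      simpa [iteratedDeriv_succ, one_mul, Pi.mul_def] using this
    have d2 : HasDerivAt (fun y : ℝ => (n:ℝ) * iteratedDeriv (n-1) Real.Gamma y)
        ((n:ℝ) * iteratedDeriv ((n-1)+1) Real.Gamma x) x := by
      have := ((gammaDiffAt (n := n-1) hx).hasDerivAt).const_mul (n:ℝ)
      simpa [iteratedDeriv_succ] using this
    have := (d1.add d2).deriv
    simp only [Pi.add_def] at this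
    rw [this]
    rcases Nat.eq_zero_or_pos n with hn | hn
    · subst hn; simp; ring
    · rw [Nat.succ_sub_one, Nat.sub_add_cancel hn]
      push_cast
      ring

theorem shiftRec (n : ℕ) (x : ℝ) (hx : 0 < x) :
    iteratedDeriv n Real.Gamma (x+1)
      = x * iteratedDeriv n Real.Gamma x + n * iteratedDeriv (n-1) Real.Gamma x := by
  have h1 : iteratedDeriv n (fun y => Real.Gamma (y + 1)) x = iteratedDeriv n Real.Gamma (x + 1) := by
    rw [iteratedDeriv_comp_add_const n Real.Gamma 1]
  have h2 : Set.EqOn (fun y => Real.Gamma (y + 1)) (fun y => y * Real.Gamma y) (Set.Ioi (0:ℝ)) := by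
    intro y hy
    exact Real.Gamma_add_one (ne_of_gt hy)
  rw [← h1, h2.iteratedDeriv_of_isOpen isOpen_Ioi n hx]
  exact mulRec n x hx

-- sign propagation
theorem signprop {c : ℝ} (hc : 0 < c) (G H : ℕ → ℝ)
    (hGH : ∀ m : ℕ, G (m+1) = ((m:ℝ) + c) * G m + H m) (ε : ℝ) :
    ∀ p q : ℕ, p < q → 0 ≤ ε * G p → (∀ r, p ≤ r → r < q → 0 < ε * H r) → 0 < ε * G q := by
  intro p q hpq
  induction q with
  | zero => omega
  | succ q ih =>
    intro hGp hH
    have key : ε * G (q+1) = ((q:ℝ) + c) * (ε * G q) + ε * H q := by rw [hGH q]; ring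
    have hq : 0 < (q:ℝ) + c := by positivity
    rcases Nat.lt_or_ge p q with h | h
    · have hGq := ih h hGp (fun r h1 h2 => hH r h1 (by omega))
      have hHq := hH q (by omega) (by omega)
      rw [key]; positivity
    · have : p = q := by omega
      subst this
      have hHq := hH p (le_refl _) (by omega)
      rw [key]
      nlinarith

theorem altlemma {c : ℝ} (hc : 0 < c) :
    ∀ (n : ℕ) (g : ℕ → ℕ → ℝ), (∀ m, 0 < g 0 m) →
    (∀ j m, g (j+1) (m+1) = ((m:ℝ) + c) * g (j+1) m + ((j:ℝ)+1) * g j m) →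
    ∀ (k : ℕ → ℕ), (∀ i j, i < j → j ≤ n → k i < k j) →
    ∃ i ≤ n, 0 < (-1:ℝ)^(n-i) * g n (k i) := by
  intro n
  induction n with
  | zero =>
    intro g hbase _ k _
    exact ⟨0, le_refl 0, by simpa using hbase (k 0)⟩
  | succ n ih =>
    intro g hbase hrec k hk
    by_contra hcon
    push_neg at hcon
    -- hcon : ∀ i ≤ n+1, (-1)^(n+1-i) * g (n+1) (k i) ≤ 0
    -- for each i with 1 ≤ i ≤ n+1, find j ∈ [k (i-1), k i) with (-1)^(n+1-i) * g n j ≤ 0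
    have step : ∀ i : ℕ, i ≤ n → ∃ j, k i ≤ j ∧ j < k (i+1) ∧ (-1:ℝ)^(n-i) * g n j ≤ 0 := by
      intro i hi
      by_contra hno
      push_neg at hno
      -- hno : ∀ j, k i ≤ j → j < k (i+1) → 0 < (-1)^(n-i) * g n j
      set ε : ℝ := (-1:ℝ)^(n-i) with hε
      have hnz : ε * ε = 1 := by
        rw [hε, ← pow_add]
        exact (neg_one_pow_eq_one_iff_even (by norm_num)).mpr ⟨n-i, rfl⟩
      have hGp : 0 ≤ ε * g (n+1) (k i) := by
        have := hcon i (by omega)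
        have hsign : (-1:ℝ)^(n+1-i) = -ε := by
          rw [hε, ← neg_one_mul ((-1:ℝ)^(n-i)), ← pow_succ']
          congr 1
          omega
        rw [hsign] at this
        linarith
      have hH : ∀ r, k i ≤ r → r < k (i+1) → 0 < ε * (((n:ℝ)+1) * g n r) := by
        intro r h1 h2
        have := hno r h1 h2
        have hn1 : (0:ℝ) < (n:ℝ)+1 := by positivity
        nlinarith
      have := signprop hc (g (n+1)) (fun m => ((n:ℝ)+1) * g n m)
        (fun m => hrec n m) ε (k i) (k (i+1)) (hk i (i+1) (by omega) (by omega)) hGp hH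
      -- contradicts hcon (i+1)
      have h2 := hcon (i+1) (by omega)
      have hs2 : (-1:ℝ)^(n+1-(i+1)) = ε := by rw [hε]; congr 1; omega
      rw [hs2] at h2
      linarith
    choose jfun hj1 hj2 hj3 using step
    -- define K i = jfun i for i ≤ n
    have : ∃ i ≤ n, 0 < (-1:ℝ)^(n-i) * g n ((fun i => if h : i ≤ n then jfun i h else 0) i) := by
      apply ih g hbase hrec
      intro a b hab hbn
      simp only [dif_pos (le_trans (le_of_lt hab) hbn), dif_pos hbn]
      have hkk : k (a+1) ≤ k b := by
        rcases Nat.eq_or_lt_of_le (Nat.succ_le_of_lt hab) with h | h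
        · rw [show a + 1 = b from h]
        · exact le_of_lt (hk (a+1) b h (by omega))
      exact lt_of_lt_of_le (hj2 a (le_trans (le_of_lt hab) hbn)) (le_trans hkk (hj1 b hbn))
    obtain ⟨i, hi, hpos⟩ := this
    simp only [dif_pos hi] at hpos
    exact absurd hpos (not_lt.mpr (hj3 i hi))

def Wfun (κ : ℚ) (n : ℕ) : ℕ → ℕ → Fin (n+1) → ℚ
  | 0, j => if h : j < n+1 then Pi.single ⟨j, h⟩ 1 else 0
  | (m+1), j => ((m : ℚ) + κ) • Wfun κ n m j + (j : ℚ) • Wfun κ n m (j-1)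

theorem Wfun_zero (κ : ℚ) (n j : ℕ) :
    Wfun κ n 0 j = if h : j < n+1 then Pi.single (⟨j, h⟩ : Fin (n+1)) (1:ℚ) else 0 := rfl

theorem Wfun_succ (κ : ℚ) (n m j : ℕ) :
    Wfun κ n (m+1) j = ((m : ℚ) + κ) • Wfun κ n m j + (j : ℚ) • Wfun κ n m (j-1) := rfl

noncomputable def Afun (κ : ℚ) (j m : ℕ) : ℝ := iteratedDeriv j Real.Gamma ((m:ℝ) + (κ:ℝ))

theorem Arec {κ : ℚ} (h0 : 0 < κ) (j m : ℕ) :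
    Afun κ j (m+1) = ((m:ℝ) + (κ:ℝ)) * Afun κ j m + (j:ℝ) * Afun κ (j-1) m := by
  have hx : (0:ℝ) < (m:ℝ) + (κ:ℝ) := by
    have : (0:ℝ) < (κ:ℝ) := by exact_mod_cast h0
    positivity
  have h := shiftRec j ((m:ℝ) + (κ:ℝ)) hx
  unfold Afun
  rw [← h]
  norm_num
  ring_nf

theorem Wzero (κ : ℚ) (h0 : 0 < κ) (n : ℕ) (m : ℕ) :
    ∃ c : ℚ, 0 < c ∧ Wfun κ n m 0 = c • (Pi.single (0 : Fin (n+1)) (1:ℚ) : Fin (n+1) → ℚ) := by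
  induction m with
  | zero =>
    refine ⟨1, one_pos, ?_⟩
    rw [Wfun_zero, dif_pos (Nat.succ_pos n)]
    simp
  | succ m ih =>
    obtain ⟨c, hc, hW⟩ := ih
    refine ⟨((m:ℚ) + κ) * c, by positivity, ?_⟩
    rw [Wfun_succ, hW]
    simp [smul_smul]

theorem expansion {κ : ℚ} (h0 : 0 < κ) (n : ℕ) : ∀ (m : ℕ) (j : ℕ), j ≤ n →
    Afun κ j m = ∑ t : Fin (n+1), (Wfun κ n m j t : ℝ) * Afun κ (t:ℕ) 0 := by
  intro m
  induction m with
  | zero =>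
    intro j hj
    simp only [Wfun_zero, dif_pos (Nat.lt_succ_of_le hj)]
    rw [Finset.sum_eq_single (⟨j, Nat.lt_succ_of_le hj⟩ : Fin (n+1))]
    · simp
    · intro b _ hb
      rw [Pi.single_apply, if_neg (fun h => hb (by rw [h]))]
      simp
    · simp
  | succ m ih =>
    intro j hj
    rw [Arec h0 j m, ih j hj, ih (j-1) (le_trans (Nat.sub_le j 1) hj)]
    simp only [Wfun_succ, Pi.add_apply, Pi.smul_apply, smul_eq_mul]
    rw [Finset.mul_sum, Finset.mul_sum, ← Finset.sum_add_distrib]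
    refine Finset.sum_congr rfl (fun t _ => ?_)
    push_cast
    ring

theorem A0trans {κ : ℚ} (h0 : 0 < κ) (hκ : Transcendental ℚ (Real.Gamma (κ:ℝ))) (m : ℕ) :
    Transcendental ℚ (Afun κ 0 m) := by
  induction m with
  | zero =>
    unfold Afun
    simpa using hκ
  | succ m ih =>
    rw [Arec h0 0 m]
    simp only [Nat.cast_zero, zero_mul, add_zero]
    intro halg
    apply ih
    have hq : ((m:ℚ) + κ) ≠ 0 := by positivity
    have h1 : IsAlgebraic ℚ ((((m:ℚ)+κ)⁻¹ : ℚ) : ℝ) := isAlgebraic_rat ℚ _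
    have h2 := (isAlgebraic_iff_isIntegral.mp h1).mul (isAlgebraic_iff_isIntegral.mp halg)
    rw [isAlgebraic_iff_isIntegral]
    convert h2 using 1
    · rfl
    push_cast [hq]
    have hr : ((m:ℝ) + (κ:ℝ)) ≠ 0 := by
      have : (0:ℝ) < (κ:ℝ) := by exact_mod_cast h0
      positivity
    field_simp







theorem countlemma {κ : ℚ} (h0 : 0 < κ) (hκ : Transcendental ℚ (Real.Gamma (κ:ℝ))) (n : ℕ)
    (T : Finset ℕ) (hT : ∀ m ∈ T, IsAlgebraic ℚ (Afun κ n m)) : T.card ≤ n := by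
  by_contra hbig
  push_neg at hbig
  obtain ⟨T', hT'sub, hT'card⟩ := Finset.exists_subset_card_eq (show n+1 ≤ T.card from hbig)
  set k : Fin (n+1) → ℕ := fun i => T'.orderEmbOfFin hT'card i with hk
  have hkmono : StrictMono k := (T'.orderEmbOfFin hT'card).strictMono
  have hkalg : ∀ i, IsAlgebraic ℚ (Afun κ n (k i)) := fun i =>
    hT _ (hT'sub (T'.orderEmbOfFin_mem hT'card i))
  set vs : Fin (n+1) → (Fin (n+1) → ℚ) := fun i => Wfun κ n (k i) n with hvs
  set e₀ : Fin (n+1) → ℚ := Pi.single 0 1 with he₀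
  have hmem : e₀ ∉ Submodule.span ℚ (Set.range vs) := by
    intro hmem
    rw [Submodule.mem_span_range_iff_exists_fun] at hmem
    obtain ⟨c, hc⟩ := hmem
    apply hκ
    have hexp : ∀ i, Afun κ n (k i) = ∑ t : Fin (n+1), (vs i t : ℝ) * Afun κ (t:ℕ) 0 :=
      fun i => expansion h0 n (k i) n le_rfl
    have h00 : Afun κ 0 0 = Real.Gamma (κ:ℝ) := by unfold Afun; norm_num
    have hkey : Real.Gamma (κ:ℝ) = ∑ i : Fin (n+1), (c i : ℝ) * Afun κ n (k i) := by
      rw [Finset.sum_congr rfl (fun i _ => by rw [hexp i, Finset.mul_sum])]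
      rw [Finset.sum_comm]
      have : ∀ t : Fin (n+1), ∑ i : Fin (n+1), (c i : ℝ) * ((vs i t : ℝ) * Afun κ (t:ℕ) 0)
          = (e₀ t : ℝ) * Afun κ (t:ℕ) 0 := by
        intro t
        have hct : (∑ i, c i * vs i t) = e₀ t := by
          rw [← hc]; simp [Finset.sum_apply]
        calc ∑ i : Fin (n+1), (c i : ℝ) * ((vs i t : ℝ) * Afun κ (t:ℕ) 0)
            = (∑ i : Fin (n+1), (c i : ℝ) * (vs i t : ℝ)) * Afun κ (t:ℕ) 0 := by
              rw [Finset.sum_mul]; exact Finset.sum_congr rfl (fun i _ => by ring)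
          _ = (e₀ t : ℝ) * Afun κ (t:ℕ) 0 := by
              congr 1
              rw [← hct]
              push_cast
              rfl
      rw [Finset.sum_congr rfl (fun t _ => this t)]
      rw [he₀]
      rw [Finset.sum_eq_single (0 : Fin (n+1))]
      · simp [h00]
      · intro b _ hb
        rw [Pi.single_apply, if_neg (fun h => hb (by rw [h]))]
        simp
      · simp
    rw [hkey]
    rw [isAlgebraic_iff_isIntegral]
    apply IsIntegral.sum
    intro i _
    exact (isAlgebraic_iff_isIntegral.mp (isAlgebraic_rat ℚ (c i))).mul
      (isAlgebraic_iff_isIntegral.mp (hkalg i))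
  obtain ⟨f, hf0, hfmap⟩ := Submodule.exists_dual_map_eq_bot_of_notMem hmem inferInstance
  have hfvanish : ∀ x ∈ Submodule.span ℚ (Set.range vs), f x = 0 := by
    intro x hx
    have h2 : f x ∈ (Submodule.span ℚ (Set.range vs)).map f := Submodule.mem_map_of_mem hx
    rw [hfmap] at h2
    simpa using h2
  set g : ℕ → ℕ → ℝ := fun j m => (((f e₀)⁻¹ * f (Wfun κ n m j) : ℚ) : ℝ) with hg
  have hbase : ∀ m, 0 < g 0 m := by
    intro m
    obtain ⟨c, hc, hW⟩ := Wzero κ h0 n m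
    rw [hg]
    simp only [hW, map_smul, smul_eq_mul]
    rw [show (f e₀)⁻¹ * (c * f e₀) = c * ((f e₀)⁻¹ * f e₀) by ring, inv_mul_cancel₀ hf0]
    · push_cast; simpa using hc
  have hrec : ∀ j m, g (j+1) (m+1) = ((m:ℝ) + (κ:ℝ)) * g (j+1) m + ((j:ℝ)+1) * g j m := by
    intro j m
    rw [hg]
    simp only [Wfun_succ κ n m (j+1), Nat.add_sub_cancel, map_add, map_smul, smul_eq_mul]
    push_cast
    ring
  have hcontra := altlemma (show (0:ℝ) < (κ:ℝ) by exact_mod_cast h0) n g hbase hrec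
    (fun i => if h : i ≤ n then k ⟨i, Nat.lt_succ_of_le h⟩ else 0)
    (by
      intro a b hab hbn
      simp only [dif_pos (le_trans (le_of_lt hab) hbn), dif_pos hbn]
      exact hkmono (by exact_mod_cast hab))
  obtain ⟨i, hi, hpos⟩ := hcontra
  simp only [dif_pos hi] at hpos
  have hzero : g n (k ⟨i, Nat.lt_succ_of_le hi⟩) = 0 := by
    rw [hg]
    have : f (Wfun κ n (k ⟨i, Nat.lt_succ_of_le hi⟩) n) = 0 :=
      hfvanish _ (Submodule.subset_span ⟨⟨i, Nat.lt_succ_of_le hi⟩, rfl⟩)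
    simp [this]
  rw [hzero] at hpos
  simp at hpos

theorem sumMin (M : ℕ) : ∀ N : ℕ, 2 * ∑ n ∈ Finset.Icc 1 N, min n (M + 1)
    = if N ≤ M then N * (N + 1) else (M+1)*(M+2) + 2*(N-(M+1))*(M+1) := by
  intro N
  induction N with
  | zero => simp
  | succ N ih =>
    rw [Finset.sum_Icc_succ_top (Nat.one_le_iff_ne_zero.mpr (Nat.succ_ne_zero N)), mul_add, ih]
    rcases Nat.lt_or_ge (N+1) (M+1) with h | h
    · rw [if_pos (by omega), if_pos (by omega), min_eq_left (by omega)]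
      ring
    · rcases Nat.eq_or_lt_of_le h with h2 | h2
      · rw [if_pos (by omega), if_neg (by omega), min_eq_right (by omega)]
        have h3 : N = M := by omega
        subst h3
        simp
        ring
      · rw [if_neg (by omega), if_neg (by omega), min_eq_right (by omega)]
        obtain ⟨D, rfl⟩ : ∃ D, N = M + 1 + D := ⟨N - (M+1), by omega⟩
        have e1 : M + 1 + D - (M + 1) = D := by omega
        have e2 : M + 1 + D + 1 - (M + 1) = D + 1 := by omega
        rw [e1, e2]
        ring



theorem stmt19 (κ : ℚ) (h0 : 0 < κ) (h1 : κ < 1)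
    (hκ : Transcendental ℚ (Real.Gamma (κ : ℝ))) (N M : ℕ) (hN : 1 ≤ N) :
    N * (M + 1) - ∑ n ∈ Finset.Icc 1 N, min n (M + 1) ≤
      {p : ℕ × ℕ | p.1 ∈ Finset.Icc 1 N ∧ p.2 ∈ Finset.Icc 0 M ∧
        Transcendental ℚ (iteratedDeriv p.1 Real.Gamma ((p.2 : ℝ) + (κ : ℝ)))}.ncard ∧
    (M + 1 ≤ N →
      (M : ℝ) / (2 * (N : ℝ)) ≤
        ({p : ℕ × ℕ | p.1 ∈ Finset.Icc 1 N ∧ p.2 ∈ Finset.Icc 0 M ∧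
          Transcendental ℚ (iteratedDeriv p.1 Real.Gamma ((p.2 : ℝ) + (κ : ℝ)))}.ncard : ℝ) /
          ((N : ℝ) * ((M : ℝ) + 1))) ∧
    (N < M + 1 →
      1 - ((N : ℝ) + 1) / (2 * ((M : ℝ) + 1)) ≤
        ({p : ℕ × ℕ | p.1 ∈ Finset.Icc 1 N ∧ p.2 ∈ Finset.Icc 0 M ∧
          Transcendental ℚ (iteratedDeriv p.1 Real.Gamma ((p.2 : ℝ) + (κ : ℝ)))}.ncard : ℝ) /
          ((N : ℝ) * ((M : ℝ) + 1))) := by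
  classical
  set F : Finset (ℕ × ℕ) := ((Finset.Icc 1 N) ×ˢ (Finset.Icc 0 M)).filter
    (fun p => Transcendental ℚ (Afun κ p.1 p.2)) with hF
  have hset : {p : ℕ × ℕ | p.1 ∈ Finset.Icc 1 N ∧ p.2 ∈ Finset.Icc 0 M ∧
      Transcendental ℚ (iteratedDeriv p.1 Real.Gamma ((p.2 : ℝ) + (κ : ℝ)))} = (↑F : Set (ℕ × ℕ)) := by
    ext p
    simp only [hF, Set.mem_setOf_eq, Finset.coe_filter, Finset.mem_product, Set.mem_setOf_eq]
    unfold Afun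
    tauto
  have hncard : {p : ℕ × ℕ | p.1 ∈ Finset.Icc 1 N ∧ p.2 ∈ Finset.Icc 0 M ∧
      Transcendental ℚ (iteratedDeriv p.1 Real.Gamma ((p.2 : ℝ) + (κ : ℝ)))}.ncard = F.card := by
    rw [hset, Set.ncard_coe_finset]
  -- fiberwise count
  have hfiber : F.card = ∑ n ∈ Finset.Icc 1 N,
      ((Finset.Icc 0 M).filter (fun m => Transcendental ℚ (Afun κ n m))).card := by
    rw [Finset.card_eq_sum_card_fiberwise (f := Prod.fst) (t := Finset.Icc 1 N)
      (fun p hp => by simp only [hF, Finset.mem_coe, Finset.mem_filter, Finset.mem_product] at hp; exact hp.1.1)]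
    refine Finset.sum_congr rfl (fun n hn => ?_)
    refine Finset.card_bij' (fun p _ => p.2) (fun m _ => (n, m)) ?_ ?_ ?_ ?_
    · intro p hp
      simp only [hF, Finset.mem_filter, Finset.mem_product] at hp ⊢
      obtain ⟨⟨⟨_, h2⟩, h3⟩, h4⟩ := hp
      exact ⟨h2, h4 ▸ h3⟩
    · intro m hm
      simp only [hF, Finset.mem_filter, Finset.mem_product] at hm ⊢
      exact ⟨⟨⟨hn, hm.1⟩, hm.2⟩, trivial⟩
    · intro p hp
      simp only [hF, Finset.mem_filter] at hp
      exact Prod.ext (by simp [hp.2]) rfl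
    · intro m hm
      rfl
  have hgood : ∀ n, 1 ≤ n → M + 1 ≤
      ((Finset.Icc 0 M).filter (fun m => Transcendental ℚ (Afun κ n m))).card + min n (M+1) := by
    intro n hn
    have hsplit := Finset.card_filter_add_card_filter_not
      (s := Finset.Icc 0 M) (p := fun m => Transcendental ℚ (Afun κ n m))
    have hbad : ((Finset.Icc 0 M).filter (fun m => ¬ Transcendental ℚ (Afun κ n m))).card ≤ min n (M+1) := by
      apply le_min
      · apply countlemma h0 hκ n
        intro m hm
        simp only [Finset.mem_filter] at hm
        exact not_not.mp hm.2
      · calc ((Finset.Icc 0 M).filter _).card ≤ (Finset.Icc 0 M).card := Finset.card_filter_le _ _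
          _ = M + 1 := by rw [Nat.card_Icc]; omega
    have hcard : (Finset.Icc 0 M).card = M + 1 := by rw [Nat.card_Icc]; omega
    omega
  have key : N * (M+1) ≤ F.card + ∑ n ∈ Finset.Icc 1 N, min n (M+1) := by
    have h2 : ∑ n ∈ Finset.Icc 1 N, (M+1) ≤ ∑ n ∈ Finset.Icc 1 N,
        (((Finset.Icc 0 M).filter (fun m => Transcendental ℚ (Afun κ n m))).card + min n (M+1)) := by
      apply Finset.sum_le_sum
      intro n hn
      exact hgood n (Finset.mem_Icc.mp hn).1
    rw [Finset.sum_const, Nat.card_Icc] at h2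
    rw [Finset.sum_add_distrib] at h2
    rw [hfiber]
    simpa using h2
  refine ⟨?_, ?_, ?_⟩
  · rw [hncard]
    exact tsub_le_iff_right.mpr key
  · intro hMN
    rw [hncard]
    have hS := sumMin M N
    rw [if_neg (by omega)] at hS
    -- derive M*(M+1) ≤ 2*F.card
    have hnat : M * (M+1) ≤ 2 * F.card := by
      obtain ⟨D, rfl⟩ : ∃ D, N = M + 1 + D := ⟨N - (M+1), by omega⟩
      have e1 : M + 1 + D - (M + 1) = D := by omega
      rw [e1] at hS
      nlinarith [key, hS]
    have hcast : (M:ℝ) * ((M:ℝ)+1) ≤ 2 * (F.card : ℝ) := by exact_mod_cast hnat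
    have hNpos : (0:ℝ) < (N:ℝ) := by exact_mod_cast hN
    rw [div_le_div_iff₀ (by positivity) (by positivity)]
    nlinarith [hcast, hNpos]
  · intro hNM
    rw [hncard]
    have hS := sumMin M N
    rw [if_pos (by omega)] at hS
    have hnat : 2 * (N * (M+1)) ≤ 2 * F.card + N * (N+1) := by
      nlinarith [key, hS]
    have hcast : 2 * ((N:ℝ) * ((M:ℝ)+1)) ≤ 2 * (F.card : ℝ) + (N:ℝ) * ((N:ℝ)+1) := by
      exact_mod_cast hnat
    have hNpos : (0:ℝ) < (N:ℝ) := by exact_mod_cast hN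
    have hMpos : (0:ℝ) < (M:ℝ) + 1 := by positivity
    rw [le_div_iff₀ (by positivity)]
    have heq : (1 - ((N:ℝ) + 1) / (2 * ((M:ℝ) + 1))) * ((N:ℝ) * ((M:ℝ) + 1))
        = (N:ℝ) * ((M:ℝ)+1) - (N:ℝ) * ((N:ℝ)+1) / 2 := by
      field_simp
    rw [heq]
    linarith [hcast]
end
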